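/- arXiv:1410.2700 — 9 statements merged into one kernel-verified Lean document; each statement's English description precedes it below -/
import Mathlib

section
/- Let T, S be bounded operators on a Hilbert space H with ST = TS and S having dense range. If x is a diskcyclic vector for T, then Sx is a diskcyclic vector for T. -/
open Filter Topology

/-- The disk orbit of `x` under `T`: `{α • Tⁿ x : n ≥ 0, α ∈ ℂ, |α| ≤ 1}`. -/
def diskOrbit {H : Type*} [NormedAddCommGroup H] [NormedSpace ℂ H]
    (T : H →L[ℂ] H) (x : H) : Set H :=
  {y | ∃ (n : ℕ) (α : ℂ), ‖α‖ ≤ 1 ∧ y = α • (T ^ n) x}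

/-- An operator is diskcyclic if some vector has dense disk orbit. -/
def DiskCyclic {H : Type*} [NormedAddCommGroup H] [NormedSpace ℂ H]
    (T : H →L[ℂ] H) : Prop :=
  ∃ x : H, Dense (diskOrbit T x)

theorem stmt3 {H : Type*} [NormedAddCommGroup H] [InnerProductSpace ℂ H] [CompleteSpace H]
    (T S : H →L[ℂ] H) (hcomm : S.comp T = T.comp S) (hS : DenseRange S)
    (x : H) (hx : Dense (diskOrbit T x)) : Dense (diskOrbit T (S x)) := by
  have hcomm' : Commute S T := hcomm
  have hdense : Dense (S '' diskOrbit T x) := hS.dense_image S.continuous hx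
  refine hdense.mono ?_
  rintro _ ⟨_, ⟨n, α, hα, rfl⟩, rfl⟩
  refine ⟨n, α, hα, ?_⟩
  have := (hcomm'.symm.pow_left n)
  simp only [map_smul]
  rw [show S ((T ^ n) x) = (T ^ n) (S x) from congrFun (congrArg DFunLike.coe this.symm) x]
end

section
/- If x is a diskcyclic vector for a bounded operator T on a Hilbert space H, then Tⁿx is also a diskcyclic vector for T for every n ∈ ℕ. -/
open Filter Topology

lemma smul_mem_diskOrbit {H : Type*} [NormedAddCommGroup H] [NormedSpace ℂ H]
    (T : H →L[ℂ] H) (z : H) {β : ℂ} (hβ : ‖β‖ ≤ 1) {y : H}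
    (hy : y ∈ diskOrbit T z) : β • y ∈ diskOrbit T z := by
  obtain ⟨n, α, hα, rfl⟩ := hy
  refine ⟨n, β * α, ?_, smul_smul _ _ _⟩
  rw [norm_mul]
  nlinarith [norm_nonneg β, norm_nonneg α]

lemma smul_mem_closure_diskOrbit {H : Type*} [NormedAddCommGroup H] [NormedSpace ℂ H]
    (T : H →L[ℂ] H) (z : H) {β : ℂ} (hβ : ‖β‖ ≤ 1) {y : H}
    (hy : y ∈ closure (diskOrbit T z)) : β • y ∈ closure (diskOrbit T z) := by
  have hm : Set.MapsTo (fun w : H => β • w) (diskOrbit T z) (diskOrbit T z) :=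
    fun w hw => smul_mem_diskOrbit T z hβ hw
  exact hm.closure (continuous_const_smul β) hy

lemma diskcyclic_step {H : Type*} [NormedAddCommGroup H] [NormedSpace ℂ H]
    (T : H →L[ℂ] H) {x : H} (hx0 : x ≠ 0) (hx : Dense (diskOrbit T x)) :
    Dense (diskOrbit T (T x)) := by
  have h2 : (2 : ℂ) • x ∈ closure (diskOrbit T (T x)) := by
    rw [Metric.mem_closure_iff]
    intro ε hε
    have hδ : 0 < min ε ‖x‖ := lt_min hε (norm_pos_iff.mpr hx0)
    have hmem : (2 : ℂ) • x ∈ closure (diskOrbit T x) := by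
      rw [hx.closure_eq]; trivial
    obtain ⟨b, hb, hdist⟩ := Metric.mem_closure_iff.mp hmem _ hδ
    obtain ⟨k, α, hα, rfl⟩ := hb
    match k with
    | 0 =>
      exfalso
      have h1 : dist ((2 : ℂ) • x) (α • (T ^ 0) x) = ‖(2 : ℂ) - α‖ * ‖x‖ := by
        simp only [pow_zero, ContinuousLinearMap.one_apply]
        rw [dist_eq_norm, ← sub_smul, norm_smul]
      have h2' : (1 : ℝ) ≤ ‖(2 : ℂ) - α‖ := by
        have := norm_sub_norm_le (2 : ℂ) α
        have h2n : ‖(2 : ℂ)‖ = 2 := by simp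
        linarith
      have hxle : min ε ‖x‖ ≤ ‖x‖ := min_le_right _ _
      rw [h1] at hdist
      nlinarith [norm_nonneg x]
    | k + 1 =>
      refine ⟨α • (T ^ k) (T x), ⟨k, α, hα, rfl⟩, ?_⟩
      have hkk : (T ^ (k + 1)) x = (T ^ k) (T x) := by
        rw [pow_succ, ContinuousLinearMap.mul_apply]
      rw [← hkk]
      exact lt_of_lt_of_le hdist (min_le_left _ _)
  have hxc : x ∈ closure (diskOrbit T (T x)) := by
    have hn : ‖(2 : ℂ)⁻¹‖ ≤ 1 := by
      rw [norm_inv]; norm_num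
    have := smul_mem_closure_diskOrbit T (T x) hn h2
    rwa [smul_smul, inv_mul_cancel₀ (by norm_num : (2 : ℂ) ≠ 0), one_smul] at this
  have hsub : diskOrbit T x ⊆ closure (diskOrbit T (T x)) := by
    rintro _ ⟨k, α, hα, rfl⟩
    match k with
    | 0 =>
      simpa [pow_zero] using smul_mem_closure_diskOrbit T (T x) hα hxc
    | k + 1 =>
      refine subset_closure ⟨k, α, hα, ?_⟩
      rw [pow_succ, ContinuousLinearMap.mul_apply]
  have hd : Dense (closure (diskOrbit T (T x))) := hx.mono hsub
  rwa [dense_closure] at hd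

theorem stmt4 {H : Type*} [NormedAddCommGroup H] [InnerProductSpace ℂ H] [CompleteSpace H]
    (T : H →L[ℂ] H) (x : H) (hx : Dense (diskOrbit T x)) :
    ∀ n : ℕ, Dense (diskOrbit T ((T ^ n) x)) := by
  intro n
  induction n with
  | zero => simpa [pow_zero] using hx
  | succ n ih =>
    by_cases h : (T ^ n) x = 0
    · have he : (T ^ (n + 1)) x = (T ^ n) x := by
        rw [pow_succ', ContinuousLinearMap.mul_apply, h, map_zero]
      rw [he]; exact ih
    · have he : (T ^ (n + 1)) x = T ((T ^ n) x) := by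
        rw [pow_succ', ContinuousLinearMap.mul_apply]
      rw [he]; exact diskcyclic_step T h ih
end

section
/- Every diskcyclic bounded operator T on a separable Hilbert space H is disk transitive: for any nonempty open sets U, V ⊆ H there exist α ∈ ℂ with 0 < |α| ≤ 1 and n ≥ 0 such that Tⁿ(αU) ∩ V ≠ ∅. -/
open Filter Topology Pointwise

/-- `T` is disk transitive if for all nonempty open `U V`, some `Tⁿ(αU)` meets `V`
with `0 < |α| ≤ 1`. -/
def DiskTransitive {H : Type*} [NormedAddCommGroup H] [NormedSpace ℂ H]
    (T : H →L[ℂ] H) : Prop :=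
  ∀ U V : Set H, IsOpen U → IsOpen V → U.Nonempty → V.Nonempty →
    ∃ (α : ℂ) (n : ℕ), 0 < ‖α‖ ∧ ‖α‖ ≤ 1 ∧ ((T ^ n) '' (α • U) ∩ V).Nonempty

lemma disk_isClosed {H : Type*} [NormedAddCommGroup H] [NormedSpace ℂ H] (c : H) :
    IsClosed {y : H | ∃ α : ℂ, ‖α‖ ≤ 1 ∧ y = α • c} := by
  have : {y : H | ∃ α : ℂ, ‖α‖ ≤ 1 ∧ y = α • c} = (fun α : ℂ => α • c) '' Metric.closedBall 0 1 := by
    ext y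
    simp only [Set.mem_setOf_eq, Set.mem_image, Metric.mem_closedBall, dist_zero_right]
    exact ⟨fun ⟨a, h1, h2⟩ => ⟨a, h1, h2.symm⟩, fun ⟨a, h1, h2⟩ => ⟨a, h1, h2.symm⟩⟩
  rw [this]
  exact ((isCompact_closedBall (0:ℂ) 1).image (continuous_id.smul continuous_const)).isClosed

lemma tail_dense {H : Type*} [NormedAddCommGroup H] [NormedSpace ℂ H]
    (T : H →L[ℂ] H) (x : H) (hx : Dense (diskOrbit T x))
    (hint : ∀ n : ℕ, interior {y : H | ∃ α : ℂ, ‖α‖ ≤ 1 ∧ y = α • (T ^ n) x} = ∅)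
    (m : ℕ) : Dense {y : H | ∃ n, m ≤ n ∧ ∃ α : ℂ, ‖α‖ ≤ 1 ∧ y = α • (T ^ n) x} := by
  induction m with
  | zero =>
    have : {y : H | ∃ n, 0 ≤ n ∧ ∃ α : ℂ, ‖α‖ ≤ 1 ∧ y = α • (T ^ n) x} = diskOrbit T x := by
      ext y; simp [diskOrbit]
    rwa [this]
  | succ m ih =>
    have hD : Dense ({y : H | ∃ α : ℂ, ‖α‖ ≤ 1 ∧ y = α • (T ^ m) x}ᶜ) :=
      interior_eq_empty_iff_dense_compl.1 (hint m)
    have hOpen : IsOpen ({y : H | ∃ α : ℂ, ‖α‖ ≤ 1 ∧ y = α • (T ^ m) x}ᶜ) :=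
      (disk_isClosed ((T ^ m) x)).isOpen_compl
    refine Dense.mono ?_ (ih.inter_of_isOpen_right hD hOpen)
    rintro y ⟨⟨n, hn, α, hα, rfl⟩, hyc⟩
    refine ⟨n, ?_, α, hα, rfl⟩
    rcases Nat.lt_or_ge m n with h | h
    · exact h
    · exfalso
      have : n = m := le_antisymm h hn
      subst this
      exact hyc ⟨α, hα, rfl⟩

theorem stmt5 {H : Type*} [NormedAddCommGroup H] [InnerProductSpace ℂ H] [CompleteSpace H]
    [TopologicalSpace.SeparableSpace H]
    (T : H →L[ℂ] H) (h : DiskCyclic T) : DiskTransitive T := by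
  obtain ⟨x, hx⟩ := h
  intro U V hU hV hUne hVne
  obtain ⟨v, hvV⟩ := hVne
  obtain ⟨u₀, hu₀U⟩ := hUne
  by_cases hv0 : v = 0
  · -- V contains 0
    subst hv0
    by_cases hu00 : u₀ = 0
    · refine ⟨1, 0, by norm_num, by norm_num,
        ⟨(T ^ 0) ((1:ℂ) • u₀), ⟨(1:ℂ) • u₀, Set.smul_mem_smul_set hu₀U, rfl⟩, ?_⟩⟩
      simpa [hu00] using hvV
    · obtain ⟨δ, hδ, hball⟩ := Metric.isOpen_iff.1 hV 0 hvV
      have hu0pos : 0 < ‖u₀‖ := norm_pos_iff.2 hu00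
      set m : ℝ := min 1 (δ / (2 * ‖u₀‖)) with hm
      have hm0 : 0 < m := lt_min one_pos (by positivity)
      refine ⟨(m : ℂ), 0, ?_, ?_,
        ⟨(T ^ 0) ((m : ℂ) • u₀), ⟨(m : ℂ) • u₀, Set.smul_mem_smul_set hu₀U, rfl⟩, ?_⟩⟩
      · simpa [Complex.norm_real, Real.norm_eq_abs, abs_of_pos hm0] using hm0
      · simp only [Complex.norm_real, Real.norm_eq_abs]
        rw [abs_of_pos hm0]
        exact min_le_left _ _
      · apply hball
        simp only [pow_zero, ContinuousLinearMap.one_apply, Metric.mem_ball, dist_zero_right,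
          norm_smul, Complex.norm_real, Real.norm_eq_abs, abs_of_pos hm0]
        have : m ≤ δ / (2 * ‖u₀‖) := min_le_right _ _
        calc m * ‖u₀‖ ≤ δ / (2 * ‖u₀‖) * ‖u₀‖ := by nlinarith
          _ = δ / 2 := by field_simp
          _ < δ := by linarith
  · -- v ≠ 0
    have : Nontrivial H := ⟨⟨v, 0, hv0⟩⟩
    have hvpos : 0 < ‖v‖ := norm_pos_iff.2 hv0
    -- nonzero element of U
    obtain ⟨u, huU, hu0⟩ : ∃ u ∈ U, u ≠ 0 := by
      by_cases h0 : u₀ = 0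
      · obtain ⟨r, hr, hball⟩ := Metric.isOpen_iff.1 hU u₀ hu₀U
        refine ⟨((r / (2 * ‖v‖) : ℝ) : ℂ) • v, ?_, ?_⟩
        · apply hball
          rw [h0, Metric.mem_ball, dist_zero_right, norm_smul, Complex.norm_real,
            Real.norm_eq_abs, abs_of_pos (by positivity)]
          calc r / (2 * ‖v‖) * ‖v‖ = r / 2 := by field_simp
            _ < r := by linarith
        · exact smul_ne_zero (Complex.ofReal_ne_zero.2 (by positivity)) hv0
      · exact ⟨u₀, hu₀U, h0⟩
    have hupos : 0 < ‖u‖ := norm_pos_iff.2 hu0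
    -- find a disk-orbit point in U, nonzero
    obtain ⟨ru, hru, hballu⟩ := Metric.isOpen_iff.1 hU u huU
    have hεu : 0 < min ru ‖u‖ := lt_min hru hupos
    obtain ⟨y, hyO, hyd⟩ := Metric.mem_closure_iff.1 (hx u) _ hεu
    obtain ⟨n₂, α₂, hα₂, rfl⟩ := hyO
    have hyU : α₂ • (T ^ n₂) x ∈ U := by
      apply hballu
      rw [Metric.mem_ball, dist_comm]
      exact lt_of_lt_of_le hyd (min_le_left _ _)
    have hyne : α₂ • (T ^ n₂) x ≠ 0 := by
      intro h0
      rw [h0, dist_zero_right] at hyd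
      exact absurd (lt_of_lt_of_le hyd (min_le_right _ _)) (lt_irrefl _)
    have hα₂0 : α₂ ≠ 0 := fun h0 => hyne (by rw [h0, zero_smul])
    have hα₂pos : 0 < ‖α₂‖ := norm_pos_iff.2 hα₂0
    by_cases hdim : ∀ n : ℕ, interior {y : H | ∃ α : ℂ, ‖α‖ ≤ 1 ∧ y = α • (T ^ n) x} = ∅
    · -- generic case: tails are dense
      have hS := tail_dense T x hx hdim n₂
      obtain ⟨rv, hrv, hballv⟩ := Metric.isOpen_iff.1 hV v hvV
      have hδ : 0 < min rv ‖v‖ := lt_min hrv hvpos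
      obtain ⟨z, hzS, hzd⟩ := Metric.mem_closure_iff.1 (hS (α₂⁻¹ • v)) _
        (div_pos hδ hα₂pos)
      obtain ⟨n₁, hn₁, α', hα', rfl⟩ := hzS
      set z : H := α' • (T ^ n₁) x with hz
      have key : ‖α₂ • z - v‖ < min rv ‖v‖ := by
        have h1 : α₂ • z - v = α₂ • (z - α₂⁻¹ • v) := by
          rw [smul_sub, smul_inv_smul₀ hα₂0]
        rw [h1, norm_smul]
        have h2 : ‖z - α₂⁻¹ • v‖ = dist (α₂⁻¹ • v) z := by
          rw [dist_eq_norm, ← norm_neg]; congr 1; abel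
        rw [h2]
        calc ‖α₂‖ * dist (α₂⁻¹ • v) z < ‖α₂‖ * (min rv ‖v‖ / ‖α₂‖) := by
              exact mul_lt_mul_of_pos_left hzd hα₂pos
          _ = min rv ‖v‖ := by
              rw [mul_comm]
              exact div_mul_cancel₀ _ (ne_of_gt hα₂pos)
      have hVmem : α₂ • z ∈ V := by
        apply hballv
        rw [Metric.mem_ball, dist_eq_norm]
        exact lt_of_lt_of_le key (min_le_left _ _)
      have hzV0 : α₂ • z ≠ 0 := by
        intro h0
        rw [h0, zero_sub, norm_neg] at key
        exact absurd (lt_of_lt_of_le key (min_le_right _ _)) (lt_irrefl _)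
      have hα'0 : α' ≠ 0 := by
        intro h0
        apply hzV0
        rw [hz, h0, zero_smul, smul_zero]
      refine ⟨α', n₁ - n₂, norm_pos_iff.2 hα'0, hα', ?_⟩
      refine ⟨(T ^ (n₁ - n₂)) (α' • (α₂ • (T ^ n₂) x)),
        ⟨α' • (α₂ • (T ^ n₂) x), Set.smul_mem_smul_set hyU, rfl⟩, ?_⟩
      have hpow : (T ^ (n₁ - n₂)) ((T ^ n₂) x) = (T ^ n₁) x := by
        rw [← ContinuousLinearMap.mul_apply, ← pow_add]
        congr 2
        omega
      have : (T ^ (n₁ - n₂)) (α' • (α₂ • (T ^ n₂) x)) = α₂ • z := by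
        rw [map_smul, map_smul, hpow, hz, smul_comm]
      rw [this]
      exact hVmem
    · -- one-dimensional case
      push_neg at hdim
      obtain ⟨k, hk⟩ := hdim
      set e : H := (T ^ k) x with he
      have hsub : {y : H | ∃ α : ℂ, ‖α‖ ≤ 1 ∧ y = α • e} ⊆ (Submodule.span ℂ {e} : Set H) := by
        rintro y ⟨α, _, rfl⟩
        exact Submodule.smul_mem _ _ (Submodule.mem_span_singleton_self e)
      have hspan : Submodule.span ℂ {e} = ⊤ := by
        apply Submodule.eq_top_of_nonempty_interior'
        obtain ⟨p, hp⟩ := hk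
        exact ⟨p, interior_mono hsub hp⟩
      have he' : ∀ y : H, ∃ c : ℂ, c • e = y := fun y =>
        Submodule.mem_span_singleton.1 (hspan ▸ Submodule.mem_top)
      obtain ⟨lam, hlam⟩ := he' (T e)
      have hTn : ∀ n : ℕ, (T ^ n) e = lam ^ n • e := by
        intro n
        induction n with
        | zero => simp
        | succ n ih =>
          rw [pow_succ, ContinuousLinearMap.mul_apply, ← hlam, map_smul, ih,
            smul_smul, ← pow_succ']
      obtain ⟨c, hc⟩ := he' x
      have hlam1 : 1 < ‖lam‖ := by
        by_contra hle
        push_neg at hle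
        obtain ⟨p, hp⟩ := NormedSpace.exists_lt_norm ℂ H (‖c‖ * ‖e‖ + 1)
        obtain ⟨y, hyO2, hyd2⟩ := Metric.mem_closure_iff.1 (hx p) 1 one_pos
        obtain ⟨n, α, hα, rfl⟩ := hyO2
        have hTx : (T ^ n) x = (c * lam ^ n) • e := by
          rw [← hc, map_smul, hTn, smul_smul]
        have hnorm : ‖α • (T ^ n) x‖ ≤ ‖c‖ * ‖e‖ := by
          rw [hTx, smul_smul, norm_smul, norm_mul, norm_mul, norm_pow]
          have hl : ‖lam‖ ^ n ≤ 1 := pow_le_one₀ (norm_nonneg _) hle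
          calc ‖α‖ * (‖c‖ * ‖lam‖ ^ n) * ‖e‖ ≤ 1 * (‖c‖ * 1) * ‖e‖ := by gcongr
            _ = ‖c‖ * ‖e‖ := by ring
        have hq : α • (T ^ n) x + (p - α • (T ^ n) x) = p := by abel
        have htri : ‖p‖ ≤ ‖α • (T ^ n) x‖ + dist p (α • (T ^ n) x) := by
          rw [dist_eq_norm]
          calc ‖p‖ = ‖α • (T ^ n) x + (p - α • (T ^ n) x)‖ := by rw [hq]
            _ ≤ ‖α • (T ^ n) x‖ + ‖p - α • (T ^ n) x‖ := norm_add_le _ _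
        linarith
      have hlam0 : lam ≠ 0 := by
        intro h0
        rw [h0, norm_zero] at hlam1
        linarith
      obtain ⟨cu, hcu⟩ := he' u
      obtain ⟨cv, hcv⟩ := he' v
      have hcu0 : cu ≠ 0 := fun h0 => hu0 (by rw [← hcu, h0, zero_smul])
      have hcv0 : cv ≠ 0 := fun h0 => hv0 (by rw [← hcv, h0, zero_smul])
      obtain ⟨n, hn⟩ := pow_unbounded_of_one_lt (‖cv / cu‖) hlam1
      refine ⟨(cv / cu) / lam ^ n, n, ?_, ?_, ?_⟩
      · exact norm_pos_iff.2 (div_ne_zero (div_ne_zero hcv0 hcu0) (pow_ne_zero _ hlam0))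
      · rw [norm_div, norm_pow]
        rw [div_le_one (by positivity)]
        exact le_of_lt hn
      · refine ⟨(T ^ n) (((cv / cu) / lam ^ n) • u), ⟨((cv / cu) / lam ^ n) • u,
          Set.smul_mem_smul_set huU, rfl⟩, ?_⟩
        have : (T ^ n) (((cv / cu) / lam ^ n) • u) = v := by
          rw [map_smul, ← hcu, map_smul, hTn, ← hcv, smul_smul, smul_smul]
          congr 1
          field_simp
        rw [this]
        exact hvV
end

section
/- For a bounded operator T on a separable Hilbert space H, the following are equivalent: (1) T is diskcyclic; (2) T is disk transitive; (3) for each x, y ∈ H there exist sequences {x_k} in H, {n_k} in ℕ, and {α_k} in ℂ with 0 < |α_k| ≤ 1 such that x_k → x and α_k T^{n_k} x_k → y. -/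
open Filter Topology Pointwise

/-! Transitivity gives, by Baire's theorem over a countable basis, a dense Gδ of vectors whose
disk orbit meets every basic open set.

Conversely let `z` have a dense disk orbit. If `dim H ≥ 2`, the lines through `Tᵐ z` are nowhere
dense, so the disk orbit remains dense after discarding its first terms and the zero multiple:
from a point `α₁ Tⁿ¹ z ∈ U` one then finds a later point `α₂ Tⁿ² z ∈ α₁⁻¹ V`, and
`α₂ Tⁿ²⁻ⁿ¹ (α₁ Tⁿ¹ z) ∈ V`. If `dim H ≤ 1`, `T` is a scalar `c`, a dense disk orbit forces
`|c| > 1`, and a nonzero `v = d u` is `(d c⁻ⁿ) Tⁿ u` with `|d c⁻ⁿ| ≤ 1` once `n` is large.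

Condition (3) says that every pair `(x, y)` lies in the closure of
`{(u, α Tⁿ u) : n ∈ ℕ, 0 < |α| ≤ 1}`, i.e. that this set is dense in `H × H`; on the basis of
products `U × V` that is transitivity. -/

theorem exists_smul_eq_of_rank_le_one {K V : Type*} [Field K] [AddCommGroup V] [Module K V]
    (h : Module.rank K V ≤ 1) {u : V} (hu : u ≠ 0) (v : V) : ∃ c : K, c • u = v := by
  obtain ⟨w, hw⟩ := rank_le_one_iff.1 h
  obtain ⟨a, rfl⟩ := hw u
  obtain ⟨b, rfl⟩ := hw v
  exact ⟨b / a, by rw [smul_smul, div_mul_cancel₀ _ (left_ne_zero_of_smul hu)]⟩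

theorem ContinuousLinearMap.exists_eq_smul_one_of_rank_le_one {K V : Type*} [Field K]
    [TopologicalSpace K] [AddCommGroup V] [Module K V] [TopologicalSpace V]
    [ContinuousConstSMul K V] (h : Module.rank K V ≤ 1) (f : V →L[K] V) :
    ∃ c : K, f = c • 1 := by
  obtain ⟨w, hw⟩ := rank_le_one_iff.1 h
  obtain ⟨c, hc⟩ := hw (f w)
  refine ⟨c, ext fun x => ?_⟩
  obtain ⟨a, rfl⟩ := hw x
  rw [map_smul, ← hc, smul_apply, one_apply_eq_self, smul_comm]

theorem Submodule.interior_eq_empty_of_one_lt_rank {𝕜 E : Type*} [NontriviallyNormedField 𝕜]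
    [NormedAddCommGroup E] [NormedSpace 𝕜 E] (h : 1 < Module.rank 𝕜 E) {p : Submodule 𝕜 E}
    (hp : p.IsPrincipal) : interior (p : Set E) = ∅ := by
  by_contra hne
  have htop : p = ⊤ := p.eq_top_of_nonempty_interior' (Set.nonempty_iff_ne_empty.2 hne)
  exact h.not_ge (Module.rank_le_one_iff_top_isPrincipal.2 (htop ▸ hp))

theorem Set.Finite.interior_biUnion_eq_empty {ι X : Type*} [TopologicalSpace X] {s : Set ι}
    (hs : s.Finite) {f : ι → Set X} (hc : ∀ i ∈ s, IsClosed (f i))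
    (hi : ∀ i ∈ s, interior (f i) = ∅) : interior (⋃ i ∈ s, f i) = ∅ := by
  rw [interior_eq_empty_iff_dense_compl, Set.compl_iUnion₂, ← Set.sInter_image]
  refine (hs.image _).dense_sInter ?_ ?_ <;> rintro _ ⟨i, hi', rfl⟩
  · exact (hc i hi').isOpen_compl
  · exact interior_eq_empty_iff_dense_compl.1 (hi i hi')

section DiskOrbit

variable {H : Type*} [NormedAddCommGroup H] [NormedSpace ℂ H] (T : H →L[ℂ] H)

theorem diskTransitive_iff : DiskTransitive T ↔
    ∀ U V : Set H, IsOpen U → IsOpen V → U.Nonempty → V.Nonempty →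
      ∃ u ∈ U, ∃ (n : ℕ) (α : ℂ), 0 < ‖α‖ ∧ ‖α‖ ≤ 1 ∧ α • (T ^ n) u ∈ V := by
  refine forall₄_congr fun U V _ _ => forall₂_congr fun _ _ => ?_
  simp only [Set.Nonempty, Set.mem_inter_iff, Set.mem_smul_set, Set.mem_image]
  constructor
  · rintro ⟨α, n, hα, hα', _, ⟨_, ⟨u, hu, rfl⟩, rfl⟩, hv⟩
    exact ⟨u, hu, n, α, hα, hα', by rwa [← map_smul]⟩
  · rintro ⟨u, hu, n, α, hα, hα', hv⟩
    exact ⟨α, n, hα, hα', _, ⟨_, ⟨u, hu, rfl⟩, rfl⟩, by rwa [map_smul]⟩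

theorem pow_apply_pow_apply (m n : ℕ) (x : H) : (T ^ m) ((T ^ n) x) = (T ^ (m + n)) x := by
  rw [pow_add]
  rfl

theorem diskTransitive_of_subsingleton [Subsingleton H] : DiskTransitive T := by
  rw [diskTransitive_iff]
  rintro U V - - ⟨u, hu⟩ ⟨v, hv⟩
  exact ⟨u, hu, 0, 1, by simp, by simp, by rwa [Subsingleton.elim (1 • (T ^ 0) u) v]⟩

section Scalar

variable {c : ℂ}

theorem smul_one_pow_apply (n : ℕ) (x : H) : ((c • 1 : H →L[ℂ] H) ^ n) x = c ^ n • x := by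
  simp only [smul_pow, one_pow, smul_apply, one_apply_eq_self]

theorem one_lt_norm_of_dense_diskOrbit_smul_one [Nontrivial H] {z : H}
    (hz : Dense (diskOrbit (c • 1) z)) : 1 < ‖c‖ := by
  by_contra! hc
  have horb : diskOrbit (c • 1) z ⊆ Metric.closedBall 0 ‖z‖ := by
    rintro _ ⟨n, α, hα, rfl⟩
    rw [mem_closedBall_zero_iff, smul_one_pow_apply, norm_smul, norm_smul, norm_pow]
    calc ‖α‖ * (‖c‖ ^ n * ‖z‖) ≤ 1 * (1 * ‖z‖) := by gcongr; exact pow_le_one₀ (by positivity) hc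
      _ = ‖z‖ := by ring
  refine NormedSpace.unbounded_univ ℂ H ?_
  rw [← hz.closure_eq]
  exact (Metric.isBounded_closedBall.subset horb).closure

theorem diskTransitive_smul_one_of_rank_le_one (hr : Module.rank ℂ H ≤ 1) (hc : 1 < ‖c‖) :
    DiskTransitive (c • 1 : H →L[ℂ] H) := by
  rcases subsingleton_or_nontrivial H with _ | _
  · exact diskTransitive_of_subsingleton _
  rw [diskTransitive_iff]
  intro U V hU hV hU' hV'
  obtain ⟨u, hu0, hu⟩ := (dense_compl_singleton (0 : H)).exists_mem_open hU hU'
  obtain ⟨v, hv0, hv⟩ := (dense_compl_singleton (0 : H)).exists_mem_open hV hV'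
  obtain ⟨d, rfl⟩ := exists_smul_eq_of_rank_le_one hr hu0 v
  have hd : d ≠ 0 := left_ne_zero_of_smul hv0
  have hc0 : c ≠ 0 := norm_pos_iff.1 (zero_lt_one.trans hc)
  obtain ⟨n, hn⟩ := pow_unbounded_of_one_lt ‖d‖ hc
  refine ⟨u, hu, n, d / c ^ n, by simp [hd, hc0], ?_, ?_⟩
  · rw [norm_div, norm_pow, div_le_one (by positivity)]
    exact hn.le
  · rwa [smul_one_pow_apply, smul_smul, div_mul_cancel₀ _ (pow_ne_zero n hc0)]

theorem diskTransitive_of_dense_diskOrbit_of_rank_le_one (hr : Module.rank ℂ H ≤ 1) {z : H}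
    (hz : Dense (diskOrbit T z)) : DiskTransitive T := by
  obtain ⟨c, rfl⟩ := T.exists_eq_smul_one_of_rank_le_one hr
  rcases subsingleton_or_nontrivial H with _ | _
  · exact diskTransitive_of_subsingleton _
  exact diskTransitive_smul_one_of_rank_le_one hr (one_lt_norm_of_dense_diskOrbit_smul_one hz)

end Scalar

theorem exists_smul_pow_mem_of_dense_diskOrbit_of_one_lt_rank (hr : 1 < Module.rank ℂ H)
    {z : H} (hz : Dense (diskOrbit T z)) (N : ℕ) {W : Set H} (hW : IsOpen W) (hW' : W.Nonempty) :
    ∃ n, N < n ∧ ∃ α : ℂ, α ≠ 0 ∧ ‖α‖ ≤ 1 ∧ α • (T ^ n) z ∈ W := by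
  set C := ⋃ m ∈ Set.Iic N, (ℂ ∙ (T ^ m) z : Set H)
  have hC : IsClosed C :=
    (Set.finite_Iic N).isClosed_biUnion fun m _ => Submodule.closed_of_finiteDimensional _
  have hWC : (W \ C).Nonempty := by
    refine Set.sdiff_nonempty.2 fun hsub => hW'.ne_empty ?_
    rw [← Set.subset_empty_iff, ← (Set.finite_Iic N).interior_biUnion_eq_empty
      (fun m _ => Submodule.closed_of_finiteDimensional _)
      (fun m _ => Submodule.interior_eq_empty_of_one_lt_rank hr ⟨_, rfl⟩)]
    exact hW.subset_interior_iff.2 hsub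
  obtain ⟨_, ⟨n, α, hα, rfl⟩, hyW, hyC⟩ := hz.exists_mem_open (hW.sdiff hC) hWC
  have mem_C {m : ℕ} (hm : m ≤ N) (β : ℂ) : β • (T ^ m) z ∈ C :=
    Set.mem_biUnion hm (Submodule.smul_mem _ _ (Submodule.mem_span_singleton_self _))
  refine ⟨n, ?_, α, ?_, hα, hyW⟩
  · by_contra! hn
    exact hyC (mem_C hn α)
  · rintro rfl
    exact hyC (by simpa using mem_C (Nat.zero_le N) 0)

theorem diskTransitive_of_dense_diskOrbit_of_one_lt_rank (hr : 1 < Module.rank ℂ H) {z : H}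
    (hz : Dense (diskOrbit T z)) : DiskTransitive T := by
  have tail := exists_smul_pow_mem_of_dense_diskOrbit_of_one_lt_rank T hr hz
  rw [diskTransitive_iff]
  intro U V hU hV hU' hV'
  obtain ⟨n₁, -, α₁, hα₁, -, hu⟩ := tail 0 hU hU'
  obtain ⟨n₂, hn, α₂, hα₂, hα₂', hv⟩ := tail n₁ (hV.smul₀ (inv_ne_zero hα₁)) hV'.smul_set
  refine ⟨_, hu, n₂ - n₁, α₂, norm_pos_iff.2 hα₂, hα₂', ?_⟩
  rw [Set.mem_inv_smul_set_iff₀ hα₁] at hv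
  rwa [map_smul, pow_apply_pow_apply, Nat.sub_add_cancel hn.le, smul_comm]

theorem DiskCyclic.diskTransitive (h : DiskCyclic T) : DiskTransitive T := by
  obtain ⟨z, hz⟩ := h
  rcases le_or_gt (Module.rank ℂ H) 1 with hr | hr
  · exact diskTransitive_of_dense_diskOrbit_of_rank_le_one T hr hz
  · exact diskTransitive_of_dense_diskOrbit_of_one_lt_rank T hr hz

theorem isOpen_setOf_inter_diskOrbit_nonempty {V : Set H} (hV : IsOpen V) :
    IsOpen {x | (V ∩ diskOrbit T x).Nonempty} := by
  have : {x | (V ∩ diskOrbit T x).Nonempty} =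
      ⋃ (n : ℕ) (α : ℂ) (_ : ‖α‖ ≤ 1), (fun x => α • (T ^ n) x) ⁻¹' V := by
    ext x
    simp [diskOrbit, Set.Nonempty, and_comm]
  rw [this]
  exact isOpen_iUnion fun n => isOpen_iUnion fun α => isOpen_iUnion fun _ =>
    hV.preimage ((T ^ n).continuous.const_smul α)

theorem DiskTransitive.dense_setOf_inter_diskOrbit_nonempty (h : DiskTransitive T)
    {V : Set H} (hV : IsOpen V) (hV' : V.Nonempty) :
    Dense {x | (V ∩ diskOrbit T x).Nonempty} := by
  refine dense_iff_inter_open.2 fun W hW hW' => ?_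
  obtain ⟨u, hu, n, α, -, hα, hv⟩ := (diskTransitive_iff T).1 h W V hW hV hW' hV'
  exact ⟨u, hu, _, hv, n, α, hα, rfl⟩

theorem DiskTransitive.diskCyclic [CompleteSpace H] [TopologicalSpace.SeparableSpace H]
    (h : DiskTransitive T) : DiskCyclic T := by
  obtain ⟨B, hBc, hB₀, hB⟩ := TopologicalSpace.exists_countable_basis H
  have hdense : Dense (⋂ V ∈ B, {x | (V ∩ diskOrbit T x).Nonempty}) :=
    dense_biInter_of_isOpen (fun V hV => isOpen_setOf_inter_diskOrbit_nonempty T (hB.isOpen hV))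
      hBc fun V hV => h.dense_setOf_inter_diskOrbit_nonempty T (hB.isOpen hV)
        (Set.nonempty_iff_ne_empty.2 fun h => hB₀ (h ▸ hV))
  obtain ⟨x, hx⟩ := hdense.nonempty
  exact ⟨x, hB.dense_iff.2 fun V hV _ => Set.mem_iInter₂.1 hx V hV⟩

def diskGraph : Set (H × H) :=
  {p | ∃ (n : ℕ) (α : ℂ), 0 < ‖α‖ ∧ ‖α‖ ≤ 1 ∧ α • (T ^ n) p.1 = p.2}

theorem diskTransitive_iff_dense_diskGraph : DiskTransitive T ↔ Dense (diskGraph T) := by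
  open TopologicalSpace in
  rw [diskTransitive_iff, (isTopologicalBasis_opens.prod isTopologicalBasis_opens).dense_iff]
  constructor
  · rintro h _ ⟨U, hU, V, hV, rfl⟩ hUV
    obtain ⟨u, hu, n, α, hα, hα', hv⟩ := h U V hU hV hUV.fst hUV.snd
    exact ⟨(u, _), ⟨hu, hv⟩, n, α, hα, hα', rfl⟩
  · intro h U V hU hV hU' hV'
    obtain ⟨⟨u, v⟩, ⟨hu, hv⟩, n, α, hα, hα', hαv⟩ := h _ ⟨U, hU, V, hV, rfl⟩ (hU'.prod hV')
    exact ⟨u, hu, n, α, hα, hα', hαv ▸ hv⟩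

theorem mem_closure_diskGraph_iff {x y : H} : (x, y) ∈ closure (diskGraph T) ↔
    ∃ (xs : ℕ → H) (ns : ℕ → ℕ) (as : ℕ → ℂ), (∀ k, 0 < ‖as k‖ ∧ ‖as k‖ ≤ 1) ∧
      Tendsto xs atTop (𝓝 x) ∧ Tendsto (fun k => as k • (T ^ ns k) (xs k)) atTop (𝓝 y) := by
  rw [mem_closure_iff_seq_limit]
  constructor
  · rintro ⟨p, hp, hlim⟩
    choose ns as has has' hpk using hp
    refine ⟨fun k => (p k).1, ns, as, fun k => ⟨has k, has' k⟩, ?_⟩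
    simp only [hpk]
    exact (Prod.tendsto_iff _ _).1 hlim
  · rintro ⟨xs, ns, as, has, hx, hy⟩
    exact ⟨fun k => (xs k, as k • (T ^ ns k) (xs k)), fun k => ⟨ns k, as k, (has k).1, (has k).2,
      rfl⟩, (Prod.tendsto_iff _ _).2 ⟨hx, hy⟩⟩

end DiskOrbit

theorem stmt8 {H : Type*} [NormedAddCommGroup H] [InnerProductSpace ℂ H] [CompleteSpace H]
    [TopologicalSpace.SeparableSpace H]
    (T : H →L[ℂ] H) :
    (DiskCyclic T ↔ DiskTransitive T) ∧
      (DiskTransitive T ↔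
        ∀ x y : H, ∃ (xs : ℕ → H) (ns : ℕ → ℕ) (as : ℕ → ℂ),
          (∀ k, 0 < ‖as k‖ ∧ ‖as k‖ ≤ 1) ∧
          Filter.Tendsto xs Filter.atTop (nhds x) ∧
          Filter.Tendsto (fun k => as k • (T ^ ns k) (xs k)) Filter.atTop (nhds y)) := by
  refine ⟨⟨DiskCyclic.diskTransitive T, DiskTransitive.diskCyclic T⟩, ?_⟩
  rw [diskTransitive_iff_dense_diskGraph]
  exact ⟨fun h x y => (mem_closure_diskGraph_iff T).1 (h (x, y)),
    fun h p => (mem_closure_diskGraph_iff T).2 (h p.1 p.2)⟩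
end

section
/- Diskcyclicity criterion: Let T be a bounded operator on a separable Hilbert space H. Suppose there exist dense subsets X, Y of H, a map S : Y → Y with TS = Id on Y, and a sequence {n_k} in ℕ such that ‖S^{n_k} y‖ → 0 for all y ∈ Y and ‖T^{n_k} x‖·‖S^{n_k} y‖ → 0 for all x ∈ X, y ∈ Y. Then T is diskcyclic. -/
open Filter Topology Pointwise

/-!
Birkhoff's transitivity argument, applied to the family of maps `w ↦ α • Tⁿ w` with `‖α‖ ≤ 1`:
if every pair of nonempty open sets is joined by some map of the family, then by Baire the points
whose orbit meets every set of a countable basis form a dense Gδ.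

Transitivity comes from the criterion. For `x ∈ X ∩ U` and `y ∈ Y ∩ V`, the vector
`z = x + c⁻¹ • S^[n k] y` satisfies `c • T^(n k) z = c • T^(n k) x + y`, and taking
`c = s / (‖T^(n k) x‖ + s)` with `s² ≥ ‖T^(n k) x‖ * ‖S^[n k] y‖` makes both errors
`c⁻¹ * ‖S^[n k] y‖` and `c * ‖T^(n k) x‖` small.
-/

open Set Metric TopologicalSpace

theorem Set.LeftInvOn.iterate {α : Type*} {f g : α → α} {s : Set α} (h : LeftInvOn f g s)
    (hg : MapsTo g s s) (n : ℕ) : LeftInvOn f^[n] g^[n] s := by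
  induction n with
  | zero => exact fun _ _ => rfl
  | succ n ih =>
    intro x hx
    rw [Function.iterate_succ_apply, Function.iterate_succ_apply', h (hg.iterate n hx), ih hx]

def IsTopologicallyTransitiveFamily {ι E : Type*} [TopologicalSpace E] (f : ι → E → E) : Prop :=
  ∀ U V : Set E, IsOpen U → U.Nonempty → IsOpen V → V.Nonempty → ∃ i, (U ∩ f i ⁻¹' V).Nonempty

theorem IsTopologicallyTransitiveFamily.exists_denseRange {ι E : Type*} [TopologicalSpace E]
    [BaireSpace E] [SecondCountableTopology E] [Nonempty E] {f : ι → E → E}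
    (htrans : IsTopologicallyTransitiveFamily f) (hf : ∀ i, Continuous (f i)) :
    ∃ x, DenseRange fun i => f i x := by
  have hopen : ∀ V ∈ countableBasis E, IsOpen (⋃ i, f i ⁻¹' V) := fun V hV =>
    isOpen_iUnion fun i => (isOpen_of_mem_countableBasis hV).preimage (hf i)
  have hdense : ∀ V ∈ countableBasis E, Dense (⋃ i, f i ⁻¹' V) := fun V hV =>
    dense_iff_inter_open.2 fun U hU hUne =>
      let ⟨i, hi⟩ := htrans U V hU hUne (isOpen_of_mem_countableBasis hV)
        (nonempty_of_mem_countableBasis hV)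
      hi.mono (inter_subset_inter_right _ (subset_iUnion (fun i => f i ⁻¹' V) i))
  obtain ⟨x, hx⟩ := (dense_biInter_of_isOpen hopen (countable_countableBasis E) hdense).nonempty
  refine ⟨x, (isBasis_countableBasis E).dense_iff.2 fun V hV _ => ?_⟩
  obtain ⟨i, hi⟩ := mem_iUnion.1 (mem_iInter₂.1 hx V hV)
  exact ⟨f i x, hi, i, rfl⟩

theorem exists_pos_le_one_mul_le_and_inv_mul_le {a b s : ℝ} (ha : 0 ≤ a) (hs : 0 < s)
    (hab : a * b ≤ s ^ 2) : ∃ c : ℝ, 0 < c ∧ c ≤ 1 ∧ c * a ≤ s ∧ c⁻¹ * b ≤ s + b := by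
  have has : 0 < a + s := by positivity
  refine ⟨s / (a + s), by positivity, (div_le_one has).2 (by linarith), ?_, ?_⟩
  · rw [div_mul_eq_mul_div, div_le_iff₀ has]
    nlinarith
  · rw [inv_div, div_mul_eq_mul_div, div_le_iff₀ hs]
    nlinarith

section DiskMap

variable {H : Type*} [NormedAddCommGroup H] [NormedSpace ℂ H]

def diskMap (T : H →L[ℂ] H) (i : ℕ × closedBall (0 : ℂ) 1) (x : H) : H :=
  (i.2 : ℂ) • (T ^ i.1) x

theorem continuous_diskMap (T : H →L[ℂ] H) (i : ℕ × closedBall (0 : ℂ) 1) :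
    Continuous (diskMap T i) :=
  (T ^ i.1).continuous.const_smul _

theorem range_diskMap (T : H →L[ℂ] H) (x : H) :
    range (fun i => diskMap T i x) = diskOrbit T x := by
  ext y
  simp [diskOrbit, diskMap, eq_comm]

theorem isTopologicallyTransitiveFamily_diskMap {T : H →L[ℂ] H} {X Y : Set H}
    (hX : Dense X) (hY : Dense Y) {S : H → H} (hSY : MapsTo S Y Y) (hTS : LeftInvOn T S Y)
    {n : ℕ → ℕ}
    (h1 : ∀ y ∈ Y, Tendsto (fun k => ‖S^[n k] y‖) atTop (𝓝 0))
    (h2 : ∀ x ∈ X, ∀ y ∈ Y, Tendsto (fun k => ‖(T ^ n k) x‖ * ‖S^[n k] y‖) atTop (𝓝 0)) :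
    IsTopologicallyTransitiveFamily (diskMap T) := by
  intro U V hU hUne hV hVne
  obtain ⟨x, hxU, hxX⟩ := hX.inter_open_nonempty U hU hUne
  obtain ⟨y, hyV, hyY⟩ := hY.inter_open_nonempty V hV hVne
  obtain ⟨rU, hrU, hballU⟩ := isOpen_iff.1 hU x hxU
  obtain ⟨rV, hrV, hballV⟩ := isOpen_iff.1 hV y hyV
  obtain ⟨δ, hδ, hδU, hδV⟩ : ∃ δ > 0, δ + δ ≤ rU ∧ δ + δ ≤ rV :=
    ⟨min rU rV / 2, by positivity, by linarith [min_le_left rU rV],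
      by linarith [min_le_right rU rV]⟩
  obtain ⟨k, hab, hb⟩ := (((h2 x hxX y hyY).eventually (ge_mem_nhds (pow_pos hδ 2))).and
    ((h1 y hyY).eventually (gt_mem_nhds hδ))).exists
  obtain ⟨c, hc0, hc1, hca, hcb⟩ :=
    exists_pos_le_one_mul_le_and_inv_mul_le (norm_nonneg _) hδ hab
  have hc : (c : ℂ) ∈ closedBall (0 : ℂ) 1 := by
    rwa [mem_closedBall_zero_iff, Complex.norm_real, Real.norm_of_nonneg hc0.le]
  set w := S^[n k] y
  have hTw : (T ^ n k) w = y := by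
    rw [FunLike.coe_pow_eq_iterate]
    exact hTS.iterate hSY (n k) hyY
  have himage : diskMap T (n k, ⟨c, hc⟩) (x + (c : ℂ)⁻¹ • w) = (c : ℂ) • (T ^ n k) x + y := by
    simp only [diskMap, map_add, map_smul, smul_add, hTw,
      smul_inv_smul₀ (Complex.ofReal_ne_zero.2 hc0.ne')]
  refine ⟨(n k, ⟨c, hc⟩), x + (c : ℂ)⁻¹ • w, hballU ?_, hballV ?_⟩
  · rw [mem_ball, dist_eq_norm, add_sub_cancel_left, norm_smul, norm_inv, Complex.norm_real,
      Real.norm_of_nonneg hc0.le]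
    linarith
  · rw [himage, mem_ball, dist_eq_norm, add_sub_cancel_right, norm_smul,
      Complex.norm_real, Real.norm_of_nonneg hc0.le]
    linarith

end DiskMap

theorem stmt9 {H : Type*} [NormedAddCommGroup H] [InnerProductSpace ℂ H] [CompleteSpace H]
    [TopologicalSpace.SeparableSpace H]
    (T : H →L[ℂ] H) (X Y : Set H) (hX : Dense X) (hY : Dense Y)
    (S : H → H) (hSY : ∀ y ∈ Y, S y ∈ Y) (hTS : ∀ y ∈ Y, T (S y) = y)
    (n : ℕ → ℕ)
    (h1 : ∀ y ∈ Y, Filter.Tendsto (fun k => ‖S^[n k] y‖) Filter.atTop (nhds 0))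
    (h2 : ∀ x ∈ X, ∀ y ∈ Y,
      Filter.Tendsto (fun k => ‖(T ^ n k) x‖ * ‖S^[n k] y‖) Filter.atTop (nhds 0)) :
    DiskCyclic T := by
  have htrans := isTopologicallyTransitiveFamily_diskMap hX hY hSY hTS h1 h2
  obtain ⟨x, hx⟩ := htrans.exists_denseRange (continuous_diskMap T)
  exact ⟨x, range_diskMap T x ▸ hx⟩
end

section
/- If T is an invertible bilateral forward weighted shift on ℓ²(ℤ) with weight sequence {w_n}, then T is diskcyclic if and only if there exists a sequence {n_r} of positive integers such that ∏_{k=1}^{n_r} 1/w_{-k} → 0 and (∏_{k=1}^{n_r} w_k)(∏_{k=1}^{n_r} 1/w_{-k}) → 0 as r → ∞. -/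
open Filter Topology Pointwise

/-!
`Tⁿ e_i = (w_i ⋯ w_{i+n-1}) e_{i+n}`. Since the weights lie between `m > 0` and `‖T‖`, products of
`n` consecutive weights over windows at a fixed distance are comparable uniformly in `n`.

If `α Tⁿ x` is close to `c e_j`, where `x_j ≠ 0` and `c` is large, coordinate `j` forces
`w_{j-n} ⋯ w_{j-1} ≳ c` while coordinate `j + n` forces `|α| w_j ⋯ w_{j+n-1} ≲ 1`; together
with `|α| ≤ 1` this gives both limits. Conversely, the two limits are the hypotheses of the
Diskcyclicity Criterion on the basis vectors, with `S_n e_j = e_{j-n} / (w_{j-n} ⋯ w_{j-1})`,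
and the Baire category theorem turns the resulting disk transitivity into a dense disk orbit.
-/

open TopologicalSpace
open scoped lp

theorem exists_one_le_mul_lt {s t δ : ℝ} (hs : 0 ≤ s) (hsδ : s < δ) (hts : 2 * (t * s) < δ * δ) :
    ∃ c : ℝ, 1 ≤ c ∧ c * s < δ ∧ t < c * δ := by
  have hδ : 0 < δ := hs.trans_lt hsδ
  refine ⟨max 1 (2 * t / δ), le_max_left _ _, ?_, ?_⟩
  · rcases max_cases 1 (2 * t / δ) with ⟨h, -⟩ | ⟨h, -⟩ <;> rw [h]
    · linarith
    · rw [div_mul_eq_mul_div, div_lt_iff₀ hδ]; linarith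
  · have h1 : δ ≤ max 1 (2 * t / δ) * δ := le_mul_of_one_le_left hδ.le (le_max_left _ _)
    have h2 : 2 * t ≤ max 1 (2 * t / δ) * δ := by
      rw [← div_le_iff₀ hδ]; exact le_max_right _ _
    linarith

section Criterion

variable {𝕜 E F : Type*} [NormedField 𝕜] [NormedAddCommGroup E] [NormedSpace 𝕜 E]
  [NormedAddCommGroup F] [NormedSpace 𝕜 F] {A : ℕ → E →L[𝕜] F}

theorem tendsto_norm_apply_mul_of_mem_span {S : Set E} {b : ℕ → ℝ} (hb : ∀ r, 0 ≤ b r)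
    (h : ∀ u ∈ S, Tendsto (fun r => ‖A r u‖ * b r) atTop (𝓝 0)) {u : E}
    (hu : u ∈ Submodule.span 𝕜 S) : Tendsto (fun r => ‖A r u‖ * b r) atTop (𝓝 0) := by
  induction hu using Submodule.span_induction with
  | mem u hu => exact h u hu
  | zero => simp
  | add u u' _ _ hu hu' =>
    refine squeeze_zero (fun r => mul_nonneg (norm_nonneg _) (hb r)) (fun r => ?_)
      (by simpa using hu.add hu')
    rw [map_add, ← add_mul]
    exact mul_le_mul_of_nonneg_right (norm_add_le _ _) (hb r)
  | smul c u _ hu =>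
    simpa [norm_smul, mul_assoc] using hu.const_mul ‖c‖

/-- The hypotheses of the Diskcyclicity Criterion at `y`, with `v r` in the role of
`S_{n_r} y`. -/
def HasDampedPreimages (A : ℕ → E →L[𝕜] F) (S : Set E) (y : F) : Prop :=
  ∃ v : ℕ → E, (∀ r, A r (v r) = y) ∧ Tendsto (fun r => ‖v r‖) atTop (𝓝 0) ∧
    ∀ u ∈ S, Tendsto (fun r => ‖A r u‖ * ‖v r‖) atTop (𝓝 0)

theorem HasDampedPreimages.of_mem_span {S : Set E} {S' : Set F}
    (h : ∀ y ∈ S', HasDampedPreimages A S y) {y : F} (hy : y ∈ Submodule.span 𝕜 S') :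
    HasDampedPreimages A S y := by
  induction hy using Submodule.span_induction with
  | mem y hy => exact h y hy
  | zero => exact ⟨0, by simp, by simp, by simp⟩
  | add y y' _ _ hy hy' =>
    obtain ⟨v, hv, hv0, hvS⟩ := hy
    obtain ⟨v', hv', hv0', hvS'⟩ := hy'
    refine ⟨v + v', by simp [hv, hv'], ?_, fun u hu => ?_⟩
    · exact squeeze_zero (fun r => norm_nonneg _) (fun r => norm_add_le _ _)
        (by simpa using hv0.add hv0')
    · refine squeeze_zero (fun r => by positivity) (fun r => ?_)
        (by simpa using (hvS u hu).add (hvS' u hu))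
      rw [← mul_add]
      exact mul_le_mul_of_nonneg_left (norm_add_le _ _) (norm_nonneg _)
  | smul c y _ hy =>
    obtain ⟨v, hv, hv0, hvS⟩ := hy
    refine ⟨c • v, by simp [hv], ?_, fun u hu => ?_⟩
    · simpa [norm_smul] using hv0.const_mul ‖c‖
    · simpa [norm_smul, mul_left_comm] using (hvS u hu).const_mul ‖c‖

end Criterion

section DiskCyclic

variable {H : Type*} [NormedAddCommGroup H] [NormedSpace ℂ H] {T : H →L[ℂ] H}

theorem DiskCyclic.of_exists_smul_pow_mem [CompleteSpace H] [SeparableSpace H]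
    (h : ∀ U V : Set H, IsOpen U → IsOpen V → U.Nonempty → V.Nonempty →
      ∃ z ∈ U, ∃ (N : ℕ) (β : ℂ), ‖β‖ ≤ 1 ∧ β • (T ^ N) z ∈ V) :
    DiskCyclic T := by
  obtain ⟨b, hbc, hb_empty, hb⟩ := exists_countable_basis H
  set F : Set H → Set H := fun V => ⋃ (N : ℕ) (β : ℂ) (_ : ‖β‖ ≤ 1), (β • (T ^ N)) ⁻¹' V
  have hF_open : ∀ V ∈ b, IsOpen (F V) := fun V hV =>
    isOpen_iUnion fun N => isOpen_iUnion fun β => isOpen_iUnion fun _ =>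
      (hb.isOpen hV).preimage (β • T ^ N).continuous
  have hF_dense : ∀ V ∈ b, Dense (F V) := by
    intro V hV
    refine dense_iff_inter_open.2 fun U hU hUne => ?_
    obtain ⟨z, hzU, N, β, hβ, hzV⟩ := h U V hU (hb.isOpen hV) hUne
      (Set.nonempty_iff_ne_empty.2 fun h => hb_empty (h ▸ hV))
    exact ⟨z, hzU, Set.mem_iUnion₂.2 ⟨N, β, Set.mem_iUnion.2 ⟨hβ, hzV⟩⟩⟩
  obtain ⟨x, hx⟩ := (dense_biInter_of_isOpen hF_open hbc hF_dense).nonempty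
  refine ⟨x, hb.dense_iff.2 fun V hV _ => ?_⟩
  obtain ⟨N, β, hβ, hxV⟩ : ∃ (N : ℕ) (β : ℂ), ‖β‖ ≤ 1 ∧ β • (T ^ N) x ∈ V := by
    simpa [F] using Set.mem_iInter₂.1 hx V hV
  exact ⟨_, hxV, N, β, hβ, rfl⟩

theorem DiskCyclic.of_hasDampedPreimages [CompleteSpace H] {S : Set H} (hS : S.Countable)
    (hS_dense : Dense (Submodule.span ℂ S : Set H)) (n : ℕ → ℕ)
    (h : ∀ y ∈ S, HasDampedPreimages (fun r => T ^ n r) S y) : DiskCyclic T := by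
  have : SeparableSpace H := isSeparable_univ_iff.1 <| by
    simpa [hS_dense.closure_eq] using hS.isSeparable.span (R := ℂ).closure
  refine DiskCyclic.of_exists_smul_pow_mem fun U V hU hV hUne hVne => ?_
  obtain ⟨u, huU, hu⟩ := hS_dense.inter_open_nonempty U hU hUne
  obtain ⟨y, hyV, hy⟩ := hS_dense.inter_open_nonempty V hV hVne
  obtain ⟨δU, hδU, hballU⟩ := Metric.isOpen_iff.1 hU u huU
  obtain ⟨δV, hδV, hballV⟩ := Metric.isOpen_iff.1 hV y hyV
  obtain ⟨v, hv, hv0, hvS⟩ := HasDampedPreimages.of_mem_span h hy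
  have hvu := tendsto_norm_apply_mul_of_mem_span (fun r => norm_nonneg (v r)) hvS hu
  set δ := min δU δV
  have hδ : 0 < δ := lt_min hδU hδV
  obtain ⟨r, hr_small, hr_damped⟩ := ((hv0.eventually_lt_const hδ).and
    (hvu.eventually_lt_const (by positivity : 0 < δ * δ / 2))).exists
  obtain ⟨c, hc1, hcv, hcu⟩ := exists_one_le_mul_lt (norm_nonneg (v r)) hr_small
    (by linarith : 2 * (‖(T ^ n r) u‖ * ‖v r‖) < δ * δ)
  have hc0 : 0 < c := one_pos.trans_le hc1
  refine ⟨u + (c : ℂ) • v r, hballU ?_, n r, (c⁻¹ : ℝ), ?_, hballV ?_⟩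
  · rw [Metric.mem_ball, dist_eq_norm, add_sub_cancel_left, norm_smul, Complex.norm_real,
      Real.norm_of_nonneg hc0.le]
    exact hcv.trans_le (min_le_left _ _)
  · rw [Complex.norm_real, Real.norm_of_nonneg (inv_nonneg.2 hc0.le)]
    exact inv_le_one_of_one_le₀ hc1
  · have : ((c⁻¹ : ℝ) : ℂ) • (T ^ n r) (u + (c : ℂ) • v r) =
        ((c⁻¹ : ℝ) : ℂ) • (T ^ n r) u + y := by
      rw [map_add, map_smul, hv, smul_add, smul_smul, ← Complex.ofReal_mul,
        inv_mul_cancel₀ hc0.ne', Complex.ofReal_one, one_smul]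
    rw [this, Metric.mem_ball, dist_eq_norm, add_sub_cancel_right, norm_smul, Complex.norm_real,
      Real.norm_of_nonneg (inv_nonneg.2 hc0.le), inv_mul_lt_iff₀ hc0]
    exact hcu.trans_le (mul_le_mul_of_nonneg_left (min_le_right _ _) hc0.le)

theorem ne_zero_of_dense_diskOrbit [Nontrivial H] {x : H} (hx : Dense (diskOrbit T x)) :
    x ≠ 0 := by
  rintro rfl
  obtain ⟨y, hy⟩ := exists_ne (0 : H)
  obtain ⟨_, ⟨N, α, -, rfl⟩, h⟩ := hx.exists_dist_lt y (norm_pos_iff.2 hy)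
  simp at h

end DiskCyclic

section WeightProd

def weightProd (w : ℤ → ℝ) (a : ℤ) (n : ℕ) : ℝ := ∏ k ∈ Finset.range n, w (a + k)

variable {w : ℤ → ℝ}

theorem weightProd_pos (hw : ∀ n, 0 < w n) (a : ℤ) (n : ℕ) : 0 < weightProd w a n :=
  Finset.prod_pos fun _ _ => hw _

@[simp]
theorem weightProd_zero (a : ℤ) : weightProd w a 0 = 1 := by simp [weightProd]

theorem weightProd_mul_weight (a : ℤ) (n : ℕ) :
    weightProd w a n * w (a + n) = w a * weightProd w (a + 1) n := by
  simp only [weightProd, ← Finset.prod_range_succ (fun k : ℕ => w (a + k)),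
    Finset.prod_range_succ' (fun k : ℕ => w (a + k))]
  push_cast
  simp only [add_zero, mul_comm, add_assoc, add_comm (1 : ℤ)]

theorem prod_weight_eq_weightProd (n : ℕ) :
    ∏ k ∈ Finset.range n, w ((k : ℤ) + 1) = weightProd w 1 n := by
  simp only [weightProd, add_comm]

theorem prod_inv_weight_eq_inv_weightProd (n : ℕ) :
    ∏ k ∈ Finset.range n, 1 / w (-((k : ℤ) + 1)) = (weightProd w (-n) n)⁻¹ := by
  rw [weightProd, ← Finset.prod_range_reflect, ← Finset.prod_inv_distrib]
  refine Finset.prod_congr rfl fun k hk => ?_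
  have hk : k < n := Finset.mem_range.1 hk
  rw [one_div]
  congr 2
  omega

variable {m M : ℝ} (hm : 0 < m) (hmw : ∀ n, m ≤ w n) (hwM : ∀ n, w n ≤ M)
include hm hmw hwM

theorem weightProd_add_one_le (a : ℤ) (n : ℕ) :
    weightProd w (a + 1) n ≤ M / m * weightProd w a n := by
  have hw : ∀ n, 0 < w n := fun n => hm.trans_le (hmw n)
  have h := weightProd_mul_weight (w := w) a n
  rw [div_mul_eq_mul_div, le_div_iff₀ hm]
  nlinarith [weightProd_pos hw a n, weightProd_pos hw (a + 1) n, hmw a, hwM (a + n)]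

theorem weightProd_le_add_one (a : ℤ) (n : ℕ) :
    weightProd w a n ≤ M / m * weightProd w (a + 1) n := by
  have hw : ∀ n, 0 < w n := fun n => hm.trans_le (hmw n)
  have h := weightProd_mul_weight (w := w) a n
  rw [div_mul_eq_mul_div, le_div_iff₀ hm]
  nlinarith [weightProd_pos hw a n, weightProd_pos hw (a + 1) n, hwM a, hmw (a + n)]

theorem exists_weightProd_le_mul (d : ℤ) :
    ∃ C, 0 ≤ C ∧ ∀ a n, weightProd w a n ≤ C * weightProd w (a + d) n := by
  have hK : 0 ≤ M / m := div_nonneg ((hm.trans_le (hmw 0)).le.trans (hwM 0)) hm.le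
  induction d using Int.induction_on with
  | zero => exact ⟨1, zero_le_one, by simp⟩
  | succ d ih =>
    obtain ⟨C, hC0, hC⟩ := ih
    refine ⟨C * (M / m), mul_nonneg hC0 hK, fun a n => (hC a n).trans ?_⟩
    rw [mul_assoc, ← add_assoc]
    exact mul_le_mul_of_nonneg_left (weightProd_le_add_one hm hmw hwM _ n) hC0
  | pred d ih =>
    obtain ⟨C, hC0, hC⟩ := ih
    refine ⟨C * (M / m), mul_nonneg hC0 hK, fun a n => (hC a n).trans ?_⟩
    rw [mul_assoc]
    convert mul_le_mul_of_nonneg_left (weightProd_add_one_le hm hmw hwM (a + (-d - 1)) n) hC0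
      using 3
    ring

end WeightProd

theorem lp.dense_span_single {ι 𝕜 : Type*} [NormedField 𝕜] [DecidableEq ι] {p : ENNReal}
    [Fact (1 ≤ p)] (hp : p ≠ ⊤) :
    Dense (Submodule.span 𝕜 (Set.range fun i => (lp.single p i (1 : 𝕜) : lp (fun _ : ι => 𝕜) p)) :
      Set (lp (fun _ : ι => 𝕜) p)) := by
  refine fun x => mem_closure_of_tendsto (lp.hasSum_single hp x) (Eventually.of_forall ?_)
  intro s
  refine Submodule.sum_mem _ fun i _ => ?_
  have hsingle : lp.single (E := fun _ : ι => 𝕜) p i (x i) = x i • lp.single p i (1 : 𝕜) := by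
    rw [← lp.single_smul, smul_eq_mul, mul_one]
  exact hsingle ▸ Submodule.smul_mem _ _ (Submodule.subset_span (Set.mem_range_self i))

section WeightedShift

variable {w : ℤ → ℝ} {T : ℓ²(ℤ, ℂ) →L[ℂ] ℓ²(ℤ, ℂ)}
  (hT : ∀ (x : ℓ²(ℤ, ℂ)) (n : ℤ), (T x : ∀ _ : ℤ, ℂ) n = (w (n - 1) : ℂ) * (x : ∀ _ : ℤ, ℂ) (n - 1))
include hT

theorem weightedShift_pow_apply_add (x : ℓ²(ℤ, ℂ)) (n : ℕ) (j : ℤ) :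
    ((T ^ n) x : ∀ _ : ℤ, ℂ) (j + n) = weightProd w j n * (x : ∀ _ : ℤ, ℂ) j := by
  induction n with
  | zero => simp
  | succ n ih =>
    rw [pow_succ', mul_apply_eq_comp, hT, Nat.cast_succ, ← add_assoc, add_sub_cancel_right, ih,
      weightProd, weightProd, Finset.prod_range_succ]
    push_cast
    ring

theorem weightedShift_pow_single (n : ℕ) (i : ℤ) (a : ℂ) :
    (T ^ n) (lp.single 2 i a) = lp.single 2 (i + n) (weightProd w i n * a) := by
  ext j
  have := weightedShift_pow_apply_add hT (lp.single 2 i a) n (j - n)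
  rw [sub_add_cancel] at this
  rw [this]
  simp only [lp.single_apply, Pi.single_apply, sub_eq_iff_eq_add]
  split_ifs with h
  · rw [h, add_sub_cancel_right]
  · exact mul_zero _

theorem weight_le_opNorm (hw : ∀ n, 0 < w n) (i : ℤ) : w i ≤ ‖T‖ := by
  have h := weightedShift_pow_single hT 1 i 1
  rw [pow_one] at h
  simpa [h, weightProd, abs_of_pos (hw i)] using T.le_opNorm (lp.single 2 i 1)

theorem weightedShift_diskCyclic_of_tendsto (hw : ∀ n, 0 < w n)
    (hcomp : ∀ d : ℤ, ∃ C, 0 ≤ C ∧ ∀ a n, weightProd w a n ≤ C * weightProd w (a + d) n)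
    (n : ℕ → ℕ)
    (h₁ : Tendsto (fun r => (weightProd w (-n r) (n r))⁻¹) atTop (𝓝 0))
    (h₂ : Tendsto (fun r => weightProd w 1 (n r) * (weightProd w (-n r) (n r))⁻¹) atTop (𝓝 0)) :
    DiskCyclic T := by
  refine DiskCyclic.of_hasDampedPreimages (Set.countable_range _)
    (lp.dense_span_single ENNReal.ofNat_ne_top) n ?_
  rintro _ ⟨j, rfl⟩
  obtain ⟨Cj, -, hCj⟩ := hcomp j
  have hv_norm : ∀ r, ‖lp.single (E := fun _ : ℤ => ℂ) 2 (-n r + j)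
      (weightProd w (-n r + j) (n r) : ℂ)⁻¹‖ ≤
      Cj * (weightProd w (-n r) (n r))⁻¹ := fun r => by
    have hP := weightProd_pos hw (-n r + j) (n r)
    have hR := weightProd_pos hw (-n r) (n r)
    rw [lp.norm_single (by norm_num), norm_inv, Complex.norm_real, Real.norm_of_nonneg hP.le,
      ← div_eq_mul_inv, le_div_iff₀ hR, inv_mul_le_iff₀ hP]
    exact (hCj _ _).trans_eq (mul_comm _ _)
  refine ⟨_, fun r => ?_, squeeze_zero (fun r => norm_nonneg _) hv_norm
    (by simpa using h₁.const_mul Cj), ?_⟩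
  · rw [weightedShift_pow_single hT, neg_add_cancel_comm, mul_inv_cancel₀ (by
      exact_mod_cast (weightProd_pos hw _ _).ne')]
  rintro _ ⟨i, rfl⟩
  obtain ⟨Ci, hCi0, hCi⟩ := hcomp (1 - i)
  refine squeeze_zero (fun r => by positivity) (fun r => ?_)
    (by simpa using h₂.const_mul (Ci * Cj))
  rw [weightedShift_pow_single hT, lp.norm_single (by norm_num), mul_one, Complex.norm_real,
    Real.norm_of_nonneg (weightProd_pos hw _ _).le]
  calc weightProd w i (n r) * _
      ≤ (Ci * weightProd w 1 (n r)) * (Cj * (weightProd w (-n r) (n r))⁻¹) := by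
        refine mul_le_mul (by simpa using hCi i (n r)) (hv_norm r) (norm_nonneg _)
          (mul_nonneg hCi0 (weightProd_pos hw _ _).le)
    _ = _ := by ring

theorem norm_apply_add_sub_le (y x : ℓ²(ℤ, ℂ)) (α : ℂ) (n : ℕ) (j : ℤ) :
    ‖(y : ∀ _ : ℤ, ℂ) (j + n) - α * weightProd w j n * (x : ∀ _ : ℤ, ℂ) j‖ ≤
      ‖y - α • (T ^ n) x‖ := by
  have h := lp.norm_apply_le_norm two_ne_zero (y - α • (T ^ n) x) (j + n)
  rwa [lp.coeFn_sub, lp.coeFn_smul, Pi.sub_apply, Pi.smul_apply, smul_eq_mul,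
    weightedShift_pow_apply_add hT, ← mul_assoc] at h

theorem sub_half_lt_of_norm_sub_lt (hw : ∀ n, 0 < w n) {x : ℓ²(ℤ, ℂ)} {α : ℂ} {c : ℝ} {t : ℤ}
    {n : ℕ} (hc : 0 ≤ c) (h : ‖(c : ℂ) • lp.single 2 t (1 : ℂ) - α • (T ^ n) x‖ < 1 / 2) :
    c - 1 / 2 < ‖α‖ * weightProd w (t - n) n * ‖x‖ := by
  have h_coord := (norm_apply_add_sub_le hT _ x α n (t - n)).trans_lt h
  simp only [sub_add_cancel, lp.coeFn_smul, Pi.smul_apply, lp.single_apply_self, smul_eq_mul,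
    mul_one] at h_coord
  have h_rev := norm_sub_norm_le (c : ℂ) (α * weightProd w (t - n) n * (x : ∀ _ : ℤ, ℂ) (t - n))
  rw [Complex.norm_real, Real.norm_of_nonneg hc, norm_mul, norm_mul, Complex.norm_real,
    Real.norm_of_nonneg (weightProd_pos hw _ _).le] at h_rev
  have hx := mul_le_mul_of_nonneg_left (lp.norm_apply_le_norm two_ne_zero x (t - n))
    (mul_nonneg (norm_nonneg α) (weightProd_pos hw (t - n) n).le)
  linarith

theorem norm_mul_weightProd_mul_lt_of_norm_sub_lt (hw : ∀ n, 0 < w n) {x : ℓ²(ℤ, ℂ)} {α : ℂ}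
    {c : ℝ} {t : ℤ} {n : ℕ} (hn : n ≠ 0)
    (h : ‖(c : ℂ) • lp.single 2 t (1 : ℂ) - α • (T ^ n) x‖ < 1 / 2) :
    ‖α‖ * weightProd w t n * ‖(x : ∀ _ : ℤ, ℂ) t‖ < 1 / 2 := by
  have h_coord := (norm_apply_add_sub_le hT _ x α n t).trans_lt h
  rwa [lp.coeFn_smul, Pi.smul_apply, lp.single_apply_ne _ _ _ (by omega), smul_zero, zero_sub,
    norm_neg, norm_mul, norm_mul, Complex.norm_real,
    Real.norm_of_nonneg (weightProd_pos hw _ _).le] at h_coord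

theorem exists_bounds_of_dense_diskOrbit (hw : ∀ n, 0 < w n)
    (hcomp : ∀ d : ℤ, ∃ C, 0 ≤ C ∧ ∀ a n, weightProd w a n ≤ C * weightProd w (a + d) n)
    {x : ℓ²(ℤ, ℂ)} (hx : Dense (diskOrbit T x)) :
    ∃ K₁ K₂ : ℝ, ∀ c : ℝ, ‖x‖ + 1 / 2 < c → ∃ n : ℕ, 0 < n ∧
      (weightProd w (-n) n)⁻¹ ≤ K₁ / (c - 1 / 2) ∧
      weightProd w 1 n * (weightProd w (-n) n)⁻¹ ≤ K₂ / (c - 1 / 2) := by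
  obtain ⟨j₀, hj₀⟩ : ∃ j₀, (x : ∀ _ : ℤ, ℂ) j₀ ≠ 0 := by
    have : Nontrivial ℓ²(ℤ, ℂ) := nontrivial_of_ne (lp.single 2 0 (1 : ℂ)) 0 fun h => by
      simpa using congrArg norm h
    by_contra! h
    exact ne_zero_of_dense_diskOrbit hx (lp.ext (funext h))
  set ξ := ‖(x : ∀ _ : ℤ, ℂ) j₀‖
  have hξ : 0 < ξ := norm_pos_iff.2 hj₀
  obtain ⟨C₁, hC₁0, hC₁⟩ := hcomp (-j₀)
  obtain ⟨C₂, hC₂0, hC₂⟩ := hcomp (j₀ - 1)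
  refine ⟨C₁ * ‖x‖, C₂ * C₁ * ‖x‖ / (2 * ξ), fun c hc => ?_⟩
  have he : 0 < c - 1 / 2 := by linarith [norm_nonneg x]
  obtain ⟨_, ⟨n, α, hα, rfl⟩, hdist⟩ :=
    hx.exists_dist_lt ((c : ℂ) • lp.single 2 j₀ (1 : ℂ)) one_half_pos
  rw [dist_eq_norm] at hdist
  have h_target := sub_half_lt_of_norm_sub_lt hT hw (by linarith) hdist
  have hα_mul : ∀ a ≥ 0, ‖α‖ * a * ‖x‖ ≤ a * ‖x‖ := fun a ha => by
    have := mul_le_mul_of_nonneg_right hα ha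
    nlinarith [norm_nonneg x]
  have hn : n ≠ 0 := by
    rintro rfl
    simp only [Nat.cast_zero, sub_zero, weightProd_zero] at h_target
    linarith [hα_mul 1 zero_le_one]
  have h_off := norm_mul_weightProd_mul_lt_of_norm_sub_lt hT hw hn hdist
  set P := weightProd w (j₀ - n) n
  have hP : 0 < P := weightProd_pos hw _ _
  have hR := weightProd_pos hw (-n) n
  have hPR : P ≤ C₁ * weightProd w (-n) n := by convert hC₁ (j₀ - n) n using 3; ring
  have h1j : weightProd w 1 n ≤ C₂ * weightProd w j₀ n := by simpa using hC₂ 1 n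
  have hPx : c - 1 / 2 ≤ P * ‖x‖ := h_target.le.trans (hα_mul P hP.le)
  have hQP : 2 * ξ * weightProd w j₀ n * (c - 1 / 2) ≤ P * ‖x‖ := by
    nlinarith [mul_pos (weightProd_pos hw j₀ n) hξ]
  refine ⟨n, Nat.pos_of_ne_zero hn, ?_, ?_⟩
  · rw [le_div_iff₀ he, inv_mul_le_iff₀ hR]
    nlinarith
  · rw [div_div, le_div_iff₀ (by positivity), ← div_eq_mul_inv, div_mul_eq_mul_div,
      div_le_iff₀ hR]
    calc weightProd w 1 n * (2 * ξ * (c - 1 / 2))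
        ≤ C₂ * weightProd w j₀ n * (2 * ξ * (c - 1 / 2)) := by gcongr
      _ ≤ C₂ * (P * ‖x‖) := by nlinarith
      _ ≤ C₂ * C₁ * ‖x‖ * weightProd w (-n) n := by
        nlinarith [mul_le_mul_of_nonneg_left hPR (mul_nonneg hC₂0 (norm_nonneg x))]

theorem exists_tendsto_of_dense_diskOrbit (hw : ∀ n, 0 < w n)
    (hcomp : ∀ d : ℤ, ∃ C, 0 ≤ C ∧ ∀ a n, weightProd w a n ≤ C * weightProd w (a + d) n)
    {x : ℓ²(ℤ, ℂ)} (hx : Dense (diskOrbit T x)) :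
    ∃ n : ℕ → ℕ, (∀ r, 0 < n r) ∧
      Tendsto (fun r => (weightProd w (-n r) (n r))⁻¹) atTop (𝓝 0) ∧
      Tendsto (fun r => weightProd w 1 (n r) * (weightProd w (-n r) (n r))⁻¹) atTop (𝓝 0) := by
  obtain ⟨K₁, K₂, hK⟩ := exists_bounds_of_dense_diskOrbit hT hw hcomp hx
  choose n hn h₁ h₂ using fun r : ℕ => hK (r + ‖x‖ + 1) (by linarith [r.cast_nonneg (α := ℝ)])
  have hc : Tendsto (fun r : ℕ => (r : ℝ) + ‖x‖ + 1 - 1 / 2) atTop atTop :=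
    tendsto_atTop_add_const_right _ _ <| tendsto_atTop_add_const_right _ _ <|
      tendsto_atTop_add_const_right _ _ tendsto_natCast_atTop_atTop
  have hR : ∀ r, 0 ≤ (weightProd w (-n r) (n r))⁻¹ := fun r =>
    inv_nonneg.2 (weightProd_pos hw _ _).le
  exact ⟨n, hn, squeeze_zero hR h₁ (tendsto_const_nhds.div_atTop hc),
    squeeze_zero (fun r => mul_nonneg (weightProd_pos hw _ _).le (hR r)) h₂
      (tendsto_const_nhds.div_atTop hc)⟩

end WeightedShift

theorem stmt11 (w : ℤ → ℝ) (hw : ∀ n, 0 < w n)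
    (hinv : ∃ m : ℝ, 0 < m ∧ ∀ n, m ≤ w n)
    (T : lp (fun _ : ℤ => ℂ) 2 →L[ℂ] lp (fun _ : ℤ => ℂ) 2)
    (hT : ∀ (x : lp (fun _ : ℤ => ℂ) 2) (n : ℤ), (T x : ∀ _ : ℤ, ℂ) n = (w (n - 1) : ℂ) * (x : ∀ _ : ℤ, ℂ) (n - 1)) :
    DiskCyclic T ↔
      ∃ n : ℕ → ℕ, (∀ r, 0 < n r) ∧
        Filter.Tendsto (fun r => ∏ k ∈ Finset.range (n r), 1 / w (-((k : ℤ) + 1)))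
          Filter.atTop (nhds 0) ∧
        Filter.Tendsto (fun r => (∏ k ∈ Finset.range (n r), w ((k : ℤ) + 1)) *
            ∏ k ∈ Finset.range (n r), 1 / w (-((k : ℤ) + 1)))
          Filter.atTop (nhds 0) := by
  obtain ⟨m, hm, hmw⟩ := hinv
  have hcomp := exists_weightProd_le_mul hm hmw (weight_le_opNorm hT hw)
  simp only [prod_weight_eq_weightProd, prod_inv_weight_eq_inv_weightProd]
  constructor
  · rintro ⟨x, hx⟩
    exact exists_tendsto_of_dense_diskOrbit hT hw hcomp hx
  · rintro ⟨n, -, h₁, h₂⟩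
    exact weightedShift_diskCyclic_of_tendsto hT hw hcomp n h₁ h₂
end

section
/- The bilateral forward weighted shift T on ℓ²(ℤ) with weights w_n = 1/3 for n ≥ 0 and w_n = 1/2 for n < 0 is supercyclic but not diskcyclic. -/
open Filter Topology Pointwise

/-- `T` is supercyclic if some vector has dense scaled orbit. -/
def Supercyclic {H : Type*} [NormedAddCommGroup H] [NormedSpace ℂ H]
    (T : H →L[ℂ] H) : Prop :=
  ∃ x : H, Dense {y | ∃ (n : ℕ) (lam : ℂ), y = lam • (T ^ n) x}

/-!
By Baire's theorem, `T` is supercyclic as soon as for all nonempty open `U`, `V` some `λ • Tⁿ`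
maps a point of `U` into `V`. This follows from the Supercyclicity Criterion with `r = 5/2`: on
finitely supported vectors `(5/2)ⁿ Tⁿ → 0` at rate `(5/6)ⁿ`, because the weights seen by a single
are eventually `1/3`, while the right inverse `S` of `T` has weights eventually `2`, so that
`(2/5)ⁿ Sⁿ → 0` at rate `(4/5)ⁿ`. On the other hand all weights have modulus at most `1/2`, so
every disk orbit stays in a ball, and a bounded set is never dense.
-/

open Function
open scoped lp ENNReal

namespace lp

section Comparison

variable {α F : Type*} [NormedAddCommGroup F] {p : ℝ≥0∞}

theorem sum_rpow_le_of_norm_le_comp (hp : 0 < p.toReal) (y : lp (fun _ : α => F) p)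
    {f : α → F} {e : α → α} (he : Injective e) {c : ℝ} (hc : 0 ≤ c)
    (h : ∀ i, ‖f i‖ ≤ c * ‖y (e i)‖) (s : Finset α) :
    ∑ i ∈ s, ‖f i‖ ^ p.toReal ≤ (c * ‖y‖) ^ p.toReal :=
  calc ∑ i ∈ s, ‖f i‖ ^ p.toReal
      ≤ ∑ i ∈ s, (c * ‖y (e i)‖) ^ p.toReal := by gcongr with i; exact h i
    _ = c ^ p.toReal * ∑ j ∈ s.map ⟨e, he⟩, ‖y j‖ ^ p.toReal := by
        simp [Finset.mul_sum, Real.mul_rpow hc (norm_nonneg _)]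
    _ ≤ c ^ p.toReal * ‖y‖ ^ p.toReal := by gcongr; exact sum_rpow_le_norm_rpow hp y _
    _ = (c * ‖y‖) ^ p.toReal := (Real.mul_rpow hc (norm_nonneg' y)).symm

theorem _root_.Memℓp.of_norm_le_comp (hp : 0 < p.toReal) (y : lp (fun _ : α => F) p)
    {f : α → F} {e : α → α} (he : Injective e) {c : ℝ} (hc : 0 ≤ c)
    (h : ∀ i, ‖f i‖ ≤ c * ‖y (e i)‖) : Memℓp f p :=
  memℓp_gen' (sum_rpow_le_of_norm_le_comp hp y he hc h)

theorem norm_le_of_norm_le_comp [Fact (1 ≤ p)] (hp : 0 < p.toReal) {x y : lp (fun _ : α => F) p}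
    {e : α → α} (he : Injective e) {c : ℝ} (hc : 0 ≤ c)
    (h : ∀ i, ‖x i‖ ≤ c * ‖y (e i)‖) : ‖x‖ ≤ c * ‖y‖ :=
  norm_le_of_forall_sum_le hp (by positivity) (sum_rpow_le_of_norm_le_comp hp y he hc h)

end Comparison

section Single

variable {ι : Type*} [DecidableEq ι] {p : ℝ≥0∞} [Fact (1 ≤ p)]

theorem dense_of_forall_single_mem {E : ι → Type*} [∀ i, NormedAddCommGroup (E i)]
    (hp : p ≠ ⊤) {S : Type*} [SetLike S (lp E p)] [AddSubmonoidClass S (lp E p)] {s : S}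
    (h : ∀ i a, lp.single p i a ∈ s) : Dense (s : Set (lp E p)) := fun f =>
  mem_closure_of_tendsto (lp.hasSum_single hp f)
    (Eventually.of_forall fun _ => sum_mem fun i _ => h i (f i))

theorem separableSpace {𝕜 : Type*} [NormedField 𝕜] [TopologicalSpace.SeparableSpace 𝕜]
    [Countable ι] (hp : p ≠ ⊤) : TopologicalSpace.SeparableSpace (lp (fun _ : ι => 𝕜) p) := by
  set s := Submodule.span 𝕜 (Set.range fun i => lp.single (E := fun _ : ι => 𝕜) p i 1)
  have hs : Dense (s : Set (lp (fun _ : ι => 𝕜) p)) :=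
    dense_of_forall_single_mem hp fun i a => by
      simpa [← lp.single_smul] using s.smul_mem a (Submodule.subset_span ⟨i, rfl⟩)
  rw [← TopologicalSpace.isSeparable_univ_iff, ← hs.closure_eq]
  exact (Set.countable_range _).isSeparable.span.closure

omit [Fact (1 ≤ p)] in
theorem iterate_apply_single {R : lp (fun _ : ℤ => ℂ) p → lp (fun _ : ℤ => ℂ) p} {d : ℤ}
    {v : ℤ → ℂ} (hR : ∀ i a, R (lp.single p i a) = lp.single p (i + d) (v i * a))
    (n : ℕ) (i : ℤ) (a : ℂ) :
    R^[n] (lp.single p i a) =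
      lp.single p (i + n * d) ((∏ k ∈ Finset.range n, v (i + k * d)) * a) := by
  induction n with
  | zero => simp
  | succ n ih =>
    rw [iterate_succ_apply', ih, hR, Finset.prod_range_succ]
    congr 1
    · push_cast; ring
    · ring

theorem tendsto_smul_iterate_single
    {R : lp (fun _ : ℤ => ℂ) p → lp (fun _ : ℤ => ℂ) p} {d : ℤ} {v : ℤ → ℂ}
    (hR : ∀ i a, R (lp.single p i a) = lp.single p (i + d) (v i * a))
    {r ρ : ℂ} (hrρ : ‖r * ρ‖ < 1) {i : ℤ} {k : ℕ} (hv : ∀ m, k ≤ m → v (i + m * d) = ρ)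
    (a : ℂ) : Tendsto (fun n => r ^ n • R^[n] (lp.single p i a)) atTop (𝓝 0) := by
  have hp : 0 < p := zero_lt_one.trans_le Fact.out
  have hnorm : ∀ n, ‖r ^ (n + k) • R^[n + k] (lp.single p i a)‖
      = ‖r ^ k * (∏ m ∈ Finset.range k, v (i + m * d)) * a‖ * ‖r * ρ‖ ^ n := fun n => by
    have hprod : ∏ m ∈ Finset.range n, v (i + (k + m : ℕ) * d) = ρ ^ n := by
      rw [Finset.prod_congr rfl fun m _ => hv _ (by omega), Finset.prod_const, Finset.card_range]
    rw [iterate_apply_single hR, ← lp.single_smul, lp.norm_single hp, add_comm n k,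
      Finset.prod_range_add, hprod]
    simp only [norm_smul, norm_mul, norm_pow]
    ring
  rw [← tendsto_add_atTop_iff_nat k, tendsto_zero_iff_norm_tendsto_zero]
  simpa only [hnorm, mul_zero] using
    (tendsto_pow_atTop_nhds_zero_of_lt_one (norm_nonneg _) hrρ).const_mul _

end Single

end lp

section TendstoZero

variable {R M : Type*} [CommSemiring R] [AddCommMonoid M] [Module R M]
  [TopologicalSpace M] [ContinuousAdd M] [ContinuousConstSMul R M]

def tendstoZeroSubmodule (L : M →ₗ[R] M) (c : ℕ → R) : Submodule R M where
  carrier := {x | Tendsto (fun n => c n • (L ^ n) x) atTop (𝓝 0)}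
  add_mem' {x y} hx hy := by
    simpa only [Set.mem_ofPred_eq, map_add, smul_add, add_zero] using hx.add hy
  zero_mem' := by simpa only [Set.mem_ofPred_eq, map_zero, smul_zero] using tendsto_const_nhds
  smul_mem' a x hx := by
    simpa only [Set.mem_ofPred_eq, map_smul, smul_comm (c _) a, smul_zero] using hx.const_smul a

theorem mem_tendstoZeroSubmodule {L : M →ₗ[R] M} {c : ℕ → R} {x : M} :
    x ∈ tendstoZeroSubmodule L c ↔ Tendsto (fun n => c n • L^[n] x) atTop (𝓝 0) := by
  simp only [tendstoZeroSubmodule, Submodule.mem_mk, AddSubmonoid.mem_mk,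
    AddSubsemigroup.mem_mk, Set.mem_ofPred_eq, Module.End.pow_apply]

end TendstoZero

section Criterion

variable {X : Type*} [NormedAddCommGroup X] [NormedSpace ℂ X]

theorem supercyclic_of_transitive [CompleteSpace X] [SecondCountableTopology X] (T : X →L[ℂ] X)
    (h : ∀ U V : Set X, IsOpen U → IsOpen V → U.Nonempty → V.Nonempty →
      ∃ (n : ℕ) (lam : ℂ), ∃ x ∈ U, lam • (T ^ n) x ∈ V) :
    Supercyclic T := by
  obtain ⟨b, hbc, hbe, hb⟩ := TopologicalSpace.exists_countable_basis X
  set A : Set X → Set X := fun V => ⋃ (n : ℕ) (lam : ℂ), (fun x => lam • (T ^ n) x) ⁻¹' V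
  have hA_open : ∀ V ∈ b, IsOpen (A V) := fun V hV =>
    isOpen_iUnion fun n => isOpen_iUnion fun lam => (hb.isOpen hV).preimage (by fun_prop)
  have hA_dense : ∀ V ∈ b, Dense (A V) := fun V hV =>
    dense_iff_inter_open.2 fun U hU hUne => by
      obtain ⟨n, lam, x, hxU, hxV⟩ :=
        h U V hU (hb.isOpen hV) hUne (Set.nonempty_iff_ne_empty.2 fun h => hbe (h ▸ hV))
      exact ⟨x, hxU, Set.mem_iUnion₂.2 ⟨n, lam, hxV⟩⟩
  obtain ⟨x, hx⟩ := (dense_biInter_of_isOpen hA_open hbc hA_dense).nonempty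
  refine ⟨x, hb.dense_iff.2 fun V hV _ => ?_⟩
  obtain ⟨n, lam, hmem⟩ := Set.mem_iUnion₂.1 (Set.mem_iInter₂.1 hx V hV)
  exact ⟨_, hmem, n, lam, rfl⟩

theorem supercyclic_of_criterion [CompleteSpace X] [SecondCountableTopology X]
    (T : X →L[ℂ] X) (S : X →ₗ[ℂ] X) (hTS : LeftInverse T S) {r : ℂ} (hr : r ≠ 0)
    (hT : Dense (tendstoZeroSubmodule (T : X →ₗ[ℂ] X) (r ^ ·) : Set X))
    (hS : Dense (tendstoZeroSubmodule S (r⁻¹ ^ ·) : Set X)) :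
    Supercyclic T := by
  refine supercyclic_of_transitive T fun U V hU hV hUne hVne => ?_
  obtain ⟨x, hxU, hx⟩ := hT.inter_open_nonempty U hU hUne
  obtain ⟨y, hyV, hy⟩ := hS.inter_open_nonempty V hV hVne
  -- `x + r⁻¹ ^ n • Sⁿ y` is close to `x`, and `r ^ n • Tⁿ` maps it close to `y`.
  have hz : Tendsto (fun n => x + r⁻¹ ^ n • S^[n] y) atTop (𝓝 x) := by
    simpa using tendsto_const_nhds.add (mem_tendstoZeroSubmodule.1 hy)
  have hTz : Tendsto (fun n => r ^ n • (T ^ n) (x + r⁻¹ ^ n • S^[n] y)) atTop (𝓝 y) := by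
    have key : ∀ n, r ^ n • (T ^ n) (x + r⁻¹ ^ n • S^[n] y) = r ^ n • T^[n] x + y := fun n => by
      rw [map_add, map_smul, pow_apply_eq_iterate, pow_apply_eq_iterate, (hTS.iterate n) y,
        smul_add, smul_smul, ← mul_pow, mul_inv_cancel₀ hr, one_pow, one_smul]
    simpa only [key, zero_add, ContinuousLinearMap.coe_coe] using
      (mem_tendstoZeroSubmodule.1 hx).add_const y
  obtain ⟨n, hnU, hnV⟩ := ((hz.eventually (hU.mem_nhds hxU)).and
    (hTz.eventually (hV.mem_nhds hyV))).exists
  exact ⟨n, r ^ n, _, hnU, hnV⟩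

theorem not_diskCyclic_of_forall_norm_apply_le [Nontrivial X] (T : X →L[ℂ] X)
    (hT : ∀ x, ‖T x‖ ≤ ‖x‖) : ¬ DiskCyclic T := by
  rintro ⟨x, hx⟩
  have hpow : ∀ n y, ‖(T ^ n) y‖ ≤ ‖y‖ := fun n y => by
    rw [pow_apply_eq_iterate]
    induction n with
    | zero => rfl
    | succ n ih => exact iterate_succ_apply' .. ▸ (hT _).trans ih
  have hbdd : Bornology.IsBounded (diskOrbit T x) := by
    refine (Metric.isBounded_closedBall (x := 0) (r := ‖x‖)).subset ?_
    rintro _ ⟨n, α, hα, rfl⟩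
    rw [mem_closedBall_zero_iff, norm_smul]
    exact (mul_le_of_le_one_left (norm_nonneg _) hα).trans (hpow n x)
  exact NormedSpace.unbounded_univ ℂ X (hx.closure_eq ▸ hbdd.closure)

end Criterion

noncomputable def weight (n : ℤ) : ℂ := if 0 ≤ n then 1 / 3 else 1 / 2

theorem weight_ne_zero (n : ℤ) : weight n ≠ 0 := by
  unfold weight; split_ifs <;> norm_num

theorem norm_weight_le_one (n : ℤ) : ‖weight n‖ ≤ 1 := by
  unfold weight; split_ifs <;> norm_num

theorem norm_weight_inv_le_three (n : ℤ) : ‖(weight n)⁻¹‖ ≤ 3 := by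
  unfold weight; split_ifs <;> norm_num

def IsWeightedShift (w : ℤ → ℂ) (T : ℓ²(ℤ, ℂ) →L[ℂ] ℓ²(ℤ, ℂ)) : Prop :=
  ∀ x n, T x n = w (n - 1) * x (n - 1)

namespace IsWeightedShift

variable {w : ℤ → ℂ} {T : ℓ²(ℤ, ℂ) →L[ℂ] ℓ²(ℤ, ℂ)}

theorem apply_single (hT : IsWeightedShift w T) (i : ℤ) (a : ℂ) :
    T (lp.single 2 i a) = lp.single 2 (i + 1) (w i * a) := by
  ext n
  rw [hT]
  by_cases hn : n = i + 1
  · simp [hn]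
  · simp [hn, sub_eq_iff_eq_add]

theorem norm_apply_le (hT : IsWeightedShift w T) {c : ℝ} (hc : 0 ≤ c) (hw : ∀ n, ‖w n‖ ≤ c)
    (x : ℓ²(ℤ, ℂ)) : ‖T x‖ ≤ c * ‖x‖ :=
  lp.norm_le_of_norm_le_comp (by norm_num) (sub_left_injective (b := 1)) hc fun n => by
    rw [hT, norm_mul]
    gcongr
    exact hw _

end IsWeightedShift

noncomputable def backwardShift : ℓ²(ℤ, ℂ) →ₗ[ℂ] ℓ²(ℤ, ℂ) where
  toFun y := ⟨fun n => (weight n)⁻¹ * y (n + 1),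
    Memℓp.of_norm_le_comp (by norm_num) y (add_left_injective 1) (by norm_num : (0 : ℝ) ≤ 3)
      fun n => by rw [norm_mul]; gcongr; exact norm_weight_inv_le_three n⟩
  map_add' y z := by ext n; exact mul_add _ _ _
  map_smul' c y := by ext n; exact mul_left_comm _ _ _

theorem backwardShift_apply (y : ℓ²(ℤ, ℂ)) (n : ℤ) :
    backwardShift y n = (weight n)⁻¹ * y (n + 1) := rfl

theorem backwardShift_single (i : ℤ) (a : ℂ) :
    backwardShift (lp.single 2 i a) = lp.single 2 (i + -1) ((weight (i + -1))⁻¹ * a) := by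
  ext n
  rw [backwardShift_apply]
  by_cases hn : n = i + -1
  · simp [hn]
  · simp [hn, ← eq_add_neg_iff_add_eq]

theorem leftInverse_backwardShift {T : ℓ²(ℤ, ℂ) →L[ℂ] ℓ²(ℤ, ℂ)}
    (hT : IsWeightedShift weight T) : LeftInverse T backwardShift := fun y => by
  ext n
  rw [hT, backwardShift_apply, sub_add_cancel, ← mul_assoc, mul_inv_cancel₀ (weight_ne_zero _),
    one_mul]

theorem IsWeightedShift.supercyclic {T : ℓ²(ℤ, ℂ) →L[ℂ] ℓ²(ℤ, ℂ)}
    (hT : IsWeightedShift weight T) : Supercyclic T := by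
  have := lp.separableSpace (𝕜 := ℂ) (ι := ℤ) (p := 2) (by simp)
  refine supercyclic_of_criterion T backwardShift (leftInverse_backwardShift hT)
    (r := 5 / 2) (by norm_num) ?_ ?_
  · refine lp.dense_of_forall_single_mem (by simp) fun i a => mem_tendstoZeroSubmodule.2 ?_
    exact lp.tendsto_smul_iterate_single hT.apply_single (ρ := 1 / 3) (k := i.natAbs)
      (by norm_num) (fun m hm => if_pos (by omega)) a
  · refine lp.dense_of_forall_single_mem (by simp) fun i a => mem_tendstoZeroSubmodule.2 ?_
    refine lp.tendsto_smul_iterate_single backwardShift_single (ρ := 2) (k := i.natAbs)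
      (by norm_num) (fun m hm => ?_) a
    simp only [weight, if_neg (by omega : ¬ 0 ≤ i + (m : ℤ) * -1 + -1)]
    norm_num

theorem IsWeightedShift.not_diskCyclic {T : ℓ²(ℤ, ℂ) →L[ℂ] ℓ²(ℤ, ℂ)}
    (hT : IsWeightedShift weight T) : ¬ DiskCyclic T := by
  have : Nontrivial ℓ²(ℤ, ℂ) :=
    (lp.isometry_single (E := fun _ : ℤ => ℂ) (p := 2) 0).injective.nontrivial
  refine not_diskCyclic_of_forall_norm_apply_le T fun x => ?_
  simpa only [one_mul] using hT.norm_apply_le zero_le_one norm_weight_le_one x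

theorem stmt13
    (T : lp (fun _ : ℤ => ℂ) 2 →L[ℂ] lp (fun _ : ℤ => ℂ) 2)
    (hT : ∀ (x : lp (fun _ : ℤ => ℂ) 2) (n : ℤ),
      (T x : ∀ _ : ℤ, ℂ) n =
        ((if 0 ≤ n - 1 then (1/3 : ℂ) else 1/2) * (x : ∀ _ : ℤ, ℂ) (n - 1))) :
    Supercyclic T ∧ ¬ DiskCyclic T :=
  ⟨IsWeightedShift.supercyclic hT, IsWeightedShift.not_diskCyclic hT⟩
end

section
/- If T is a diskcyclic operator on a Hilbert space H, then the adjoint T* has at most one eigenvalue, and any eigenvalue of T* has modulus greater than 1. -/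
open Filter Topology Pointwise

/-!
If `T* v = μ v`, then `⟪v, α Tⁿ x⟫ = α (conj μ)ⁿ ⟪v, x⟫`, and closed conditions on these values
propagate from a dense disk orbit to the whole space. Hence `⟪v, x⟫ ≠ 0` (else `v ⊥ H`), and
`‖μ‖ ≤ 1` is impossible since `‖⟪v, ·⟫‖` would be bounded by `‖⟪v, x⟫‖` on `H`. For a second
eigenpair `T* w = ν w` with `‖ν‖ ≤ ‖μ‖` one gets `‖⟪w, y⟫‖ ‖⟪v, x⟫‖ ≤ ‖⟪v, y⟫‖ ‖⟪w, x⟫‖` for all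
`y`, so `w ⊥ vᗮ`, i.e. `w ∈ ℂ ∙ v`, and hence `ν = μ`.
-/

open scoped InnerProductSpace ComplexConjugate

section InnerProduct

variable {𝕜 E : Type*} [RCLike 𝕜] [NormedAddCommGroup E] [InnerProductSpace 𝕜 E]

lemma mem_span_singleton_of_forall_inner_eq_zero {v w : E}
    (h : ∀ y, ⟪v, y⟫_𝕜 = 0 → ⟪w, y⟫_𝕜 = 0) : w ∈ 𝕜 ∙ v := by
  rw [← Submodule.orthogonal_orthogonal (𝕜 ∙ v), Submodule.mem_orthogonal']
  exact fun y hy => h y (Submodule.mem_orthogonal_singleton_iff_inner_right.mp hy)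

lemma inner_pow_apply_of_adjoint_apply_eq [CompleteSpace E] {T : E →L[𝕜] E} {v : E} {μ : 𝕜}
    (hv : ContinuousLinearMap.adjoint T v = μ • v) (n : ℕ) (x : E) :
    ⟪v, (T ^ n) x⟫_𝕜 = conj μ ^ n * ⟪v, x⟫_𝕜 := by
  induction n with
  | zero => simp
  | succ n ih =>
    rw [pow_succ', mul_apply_eq_comp, ← ContinuousLinearMap.adjoint_inner_left, hv,
      inner_smul_left, ih, pow_succ']
    ring

end InnerProduct

section DiskOrbit

variable {H : Type*} [NormedAddCommGroup H] [InnerProductSpace ℂ H] [CompleteSpace H]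
  {T : H →L[ℂ] H} {v w x : H} {μ ν : ℂ}

lemma norm_inner_smul_pow_apply_of_adjoint_apply_eq
    (hv : ContinuousLinearMap.adjoint T v = μ • v) (α : ℂ) (n : ℕ) (x : H) :
    ‖⟪v, α • (T ^ n) x⟫_ℂ‖ = ‖α‖ * ‖μ‖ ^ n * ‖⟪v, x⟫_ℂ‖ := by
  rw [inner_smul_right, inner_pow_apply_of_adjoint_apply_eq hv, norm_mul, norm_mul, norm_pow,
    RCLike.norm_conj, mul_assoc]

lemma inner_ne_zero_of_dense_diskOrbit (hx : Dense (diskOrbit T x)) (hv0 : v ≠ 0)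
    (hv : ContinuousLinearMap.adjoint T v = μ • v) : ⟪v, x⟫_ℂ ≠ 0 := by
  intro h0
  have horth : ∀ y, ⟪v, y⟫_ℂ = 0 := hx.induction
    (by
      rintro _ ⟨n, α, -, rfl⟩
      rw [inner_smul_right, inner_pow_apply_of_adjoint_apply_eq hv, h0, mul_zero, mul_zero])
    (isClosed_eq (by fun_prop) continuous_const)
  exact hv0 (inner_self_eq_zero.mp (horth v))

lemma one_lt_norm_of_dense_diskOrbit (hx : Dense (diskOrbit T x)) (hv0 : v ≠ 0)
    (hv : ContinuousLinearMap.adjoint T v = μ • v) : 1 < ‖μ‖ := by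
  by_contra! hμ
  have hbound : ∀ y, ‖⟪v, y⟫_ℂ‖ ≤ ‖⟪v, x⟫_ℂ‖ := hx.induction
    (by
      rintro _ ⟨n, α, hα, rfl⟩
      rw [norm_inner_smul_pow_apply_of_adjoint_apply_eq hv]
      have hμn : ‖μ‖ ^ n ≤ 1 := pow_le_one₀ (norm_nonneg μ) hμ
      calc ‖α‖ * ‖μ‖ ^ n * ‖⟪v, x⟫_ℂ‖ ≤ 1 * 1 * ‖⟪v, x⟫_ℂ‖ := by gcongr
        _ = ‖⟪v, x⟫_ℂ‖ := by ring)
    (isClosed_le (by fun_prop) continuous_const)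
  have h2x := hbound ((2 : ℂ) • x)
  rw [inner_smul_right, norm_mul, Complex.norm_two] at h2x
  exact inner_ne_zero_of_dense_diskOrbit hx hv0 hv
    (norm_eq_zero.mp (by linarith [norm_nonneg ⟪v, x⟫_ℂ]))

lemma eq_of_dense_diskOrbit_of_norm_le (hx : Dense (diskOrbit T x)) (hv0 : v ≠ 0)
    (hv : ContinuousLinearMap.adjoint T v = μ • v) (hw0 : w ≠ 0)
    (hw : ContinuousLinearMap.adjoint T w = ν • w) (hνμ : ‖ν‖ ≤ ‖μ‖) : μ = ν := by
  have hbound : ∀ y, ‖⟪w, y⟫_ℂ‖ * ‖⟪v, x⟫_ℂ‖ ≤ ‖⟪v, y⟫_ℂ‖ * ‖⟪w, x⟫_ℂ‖ := hx.induction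
    (by
      rintro _ ⟨n, α, -, rfl⟩
      rw [norm_inner_smul_pow_apply_of_adjoint_apply_eq hv,
        norm_inner_smul_pow_apply_of_adjoint_apply_eq hw]
      calc ‖α‖ * ‖ν‖ ^ n * ‖⟪w, x⟫_ℂ‖ * ‖⟪v, x⟫_ℂ‖
          ≤ ‖α‖ * ‖μ‖ ^ n * ‖⟪w, x⟫_ℂ‖ * ‖⟪v, x⟫_ℂ‖ := by gcongr
        _ = ‖α‖ * ‖μ‖ ^ n * ‖⟪v, x⟫_ℂ‖ * ‖⟪w, x⟫_ℂ‖ := by ring)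
    (isClosed_le (by fun_prop) (by fun_prop))
  have hperp : ∀ y, ⟪v, y⟫_ℂ = 0 → ⟪w, y⟫_ℂ = 0 := fun y hy => by
    have hle := hbound y
    rw [hy, norm_zero, zero_mul] at hle
    exact norm_le_zero_iff.mp <| nonpos_of_mul_nonpos_left hle <|
      norm_pos_iff.mpr (inner_ne_zero_of_dense_diskOrbit hx hv0 hv)
  obtain ⟨c, rfl⟩ :=
    Submodule.mem_span_singleton.mp (mem_span_singleton_of_forall_inner_eq_zero hperp)
  have hsmul : μ • c • v = ν • c • v := by rw [← hw, map_smul, hv, smul_comm]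
  exact smul_left_injective ℂ hw0 hsmul

end DiskOrbit

theorem stmt14 {H : Type*} [NormedAddCommGroup H] [InnerProductSpace ℂ H] [CompleteSpace H]
    (T : H →L[ℂ] H) (h : DiskCyclic T) :
    (∀ μ ν : ℂ, (∃ v : H, v ≠ 0 ∧ ContinuousLinearMap.adjoint T v = μ • v) →
      (∃ v : H, v ≠ 0 ∧ ContinuousLinearMap.adjoint T v = ν • v) → μ = ν) ∧
    ∀ μ : ℂ, (∃ v : H, v ≠ 0 ∧ ContinuousLinearMap.adjoint T v = μ • v) → 1 < ‖μ‖ := by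
  obtain ⟨x, hx⟩ := h
  refine ⟨fun μ ν ⟨v, hv0, hv⟩ ⟨w, hw0, hw⟩ => ?_,
    fun μ ⟨v, hv0, hv⟩ => one_lt_norm_of_dense_diskOrbit hx hv0 hv⟩
  rcases le_total ‖ν‖ ‖μ‖ with hνμ | hμν
  · exact eq_of_dense_diskOrbit_of_norm_le hx hv0 hv hw0 hw hνμ
  · exact (eq_of_dense_diskOrbit_of_norm_le hx hw0 hw hv0 hv hμν).symm
end

section
/- For the operator T = aB on ℓ²(ℕ), where B is the unilateral backward shift and a ∈ ℂ: T is diskcyclic if and only if |a| > 1. In particular, a scalar multiple of the unilateral backward shift is diskcyclic if and only if it is hypercyclic. -/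
open Filter Topology Pointwise

/-- `T` is hypercyclic if some vector has dense orbit. -/
def Hypercyclic {H : Type*} [NormedAddCommGroup H] [NormedSpace ℂ H]
    (T : H →L[ℂ] H) : Prop :=
  ∃ x : H, Dense {y | ∃ n : ℕ, y = (T ^ n) x}

/-!
For `‖a‖ ≤ 1` the operator `a • B` is a contraction, so every disk orbit stays in a ball and cannot
be dense. For `‖a‖ > 1` the operator is topologically transitive: for finitely supported `u` and
`v`, the vector `u + a⁻ⁿ Sⁿ v` (`S` the forward shift) is close to `u` for large `n` and is sent
to `v` by `(a • B)ⁿ` as soon as `n` exceeds the support of `u`. As `ℓ²` is complete and separable,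
Birkhoff's transitivity theorem (a Baire category argument) then yields a hypercyclic vector, and
a hypercyclic vector is diskcyclic.
-/

open Set TopologicalSpace

def IsTopologicallyTransitive {X : Type*} [TopologicalSpace X] (f : X → X) : Prop :=
  ∀ U V : Set X, IsOpen U → U.Nonempty → IsOpen V → V.Nonempty → ∃ n, (U ∩ f^[n] ⁻¹' V).Nonempty

theorem IsTopologicallyTransitive.exists_dense_orbit {X : Type*} [TopologicalSpace X]
    [BaireSpace X] [SecondCountableTopology X] [Nonempty X] {f : X → X} (hf : Continuous f)
    (htrans : IsTopologicallyTransitive f) :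
    ∃ x, Dense (range fun n => f^[n] x) := by
  set b := countableBasis X
  have hvisit : Dense (⋂ V ∈ b, ⋃ n, f^[n] ⁻¹' V) := by
    refine dense_biInter_of_isOpen (fun V hV => ?_) (countable_countableBasis X) fun V hV => ?_
    · exact isOpen_iUnion fun n => ((isBasis_countableBasis X).isOpen hV).preimage (hf.iterate n)
    · rw [dense_iff_inter_open]
      intro U hU hUne
      obtain ⟨n, x, hxU, hxV⟩ := htrans U V hU hUne ((isBasis_countableBasis X).isOpen hV)
        (nonempty_of_mem_countableBasis hV)
      exact ⟨x, hxU, mem_iUnion.2 ⟨n, hxV⟩⟩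
  obtain ⟨x, hx⟩ := hvisit.nonempty
  refine ⟨x, (isBasis_countableBasis X).dense_iff.2 fun V hV _ => ?_⟩
  obtain ⟨n, hn⟩ := mem_iUnion.1 (mem_iInter₂.1 hx V hV)
  exact ⟨_, hn, n, rfl⟩

theorem Hypercyclic.diskCyclic {H : Type*} [NormedAddCommGroup H] [NormedSpace ℂ H]
    {T : H →L[ℂ] H} (hT : Hypercyclic T) : DiskCyclic T := by
  obtain ⟨x, hx⟩ := hT
  refine ⟨x, hx.mono ?_⟩
  rintro _ ⟨n, rfl⟩
  exact ⟨n, 1, norm_one.le, (one_smul ℂ _).symm⟩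

theorem hypercyclic_of_isTopologicallyTransitive {H : Type*} [NormedAddCommGroup H]
    [NormedSpace ℂ H] [CompleteSpace H] [SeparableSpace H] {T : H →L[ℂ] H}
    (htrans : IsTopologicallyTransitive ⇑T) : Hypercyclic T := by
  obtain ⟨x, hx⟩ := htrans.exists_dense_orbit T.continuous
  refine ⟨x, hx.mono ?_⟩
  rintro _ ⟨n, rfl⟩
  exact ⟨n, by rw [FunLike.coe_pow_eq_iterate]⟩

theorem not_diskCyclic_of_norm_le_one {H : Type*} [NormedAddCommGroup H] [NormedSpace ℂ H]
    [Nontrivial H] {T : H →L[ℂ] H} (hT : ‖T‖ ≤ 1) : ¬ DiskCyclic T := by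
  rintro ⟨x, hx⟩
  have hpow : ∀ n, ‖(T ^ n) x‖ ≤ ‖x‖ := by
    intro n
    induction n with
    | zero => simp
    | succ n ih =>
      rw [pow_succ']
      calc ‖T ((T ^ n) x)‖ ≤ ‖(T ^ n) x‖ := by simpa using T.le_of_opNorm_le hT ((T ^ n) x)
        _ ≤ ‖x‖ := ih
  have hbdd : Bornology.IsBounded (diskOrbit T x) := by
    refine (Metric.isBounded_closedBall (x := 0) (r := ‖x‖)).subset ?_
    rintro _ ⟨n, α, hα, rfl⟩
    rw [mem_closedBall_zero_iff, norm_smul]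
    exact (mul_le_of_le_one_left (norm_nonneg _) hα).trans (hpow n)
  exact NormedSpace.unbounded_univ ℂ H (by simpa [hx.closure_eq] using hbdd.closure)

theorem lp.separableSpace_s16 {ι 𝕜 : Type*} [Countable ι] [NontriviallyNormedField 𝕜]
    [SeparableSpace 𝕜] {p : ENNReal} [Fact (1 ≤ p)] (hp : p ≠ ⊤) :
    SeparableSpace (lp (fun _ : ι => 𝕜) p) := by
  classical
  rw [← isSeparable_univ_iff]
  have hspan := (countable_range fun i => lp.single (E := fun _ : ι => 𝕜) p i 1).isSeparable.span
    (R := 𝕜)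
  refine hspan.closure.mono fun f _ => mem_closure_of_tendsto (lp.hasSum_single hp f) ?_
  refine Eventually.of_forall fun s => Submodule.sum_mem _ fun i _ => ?_
  have : lp.single p i (f i) = f i • lp.single (E := fun _ : ι => 𝕜) p i 1 := by
    ext j; by_cases h : j = i <;> simp [h]
  rw [this]
  exact Submodule.smul_mem _ _ (Submodule.subset_span ⟨i, rfl⟩)

local notation "ℓ²" => lp (fun _ : ℕ => ℂ) 2

def IsBackwardShift (B : ℓ² →L[ℂ] ℓ²) : Prop :=
  ∀ (x : ℓ²) (n : ℕ), (B x : ∀ _ : ℕ, ℂ) n = (x : ∀ _ : ℕ, ℂ) (n + 1)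

instance : Nontrivial ℓ² :=
  nontrivial_of_ne (lp.single 2 0 1) 0 fun h => by
    simpa using congrArg (fun x : ℓ² => (x : ∀ _ : ℕ, ℂ) 0) h

instance : SeparableSpace ℓ² := lp.separableSpace_s16 (by norm_num)

namespace IsBackwardShift

variable {B : ℓ² →L[ℂ] ℓ²}

theorem norm_le_one (hB : IsBackwardShift B) : ‖B‖ ≤ 1 := by
  refine B.opNorm_le_bound zero_le_one fun x => ?_
  rw [one_mul]
  refine lp.norm_le_of_forall_sum_le (by norm_num) (norm_nonneg x) fun s => ?_
  calc ∑ i ∈ s, ‖(B x : ∀ _ : ℕ, ℂ) i‖ ^ (2 : ENNReal).toReal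
      = ∑ i ∈ s.map (addRightEmbedding 1), ‖(x : ∀ _ : ℕ, ℂ) i‖ ^ (2 : ENNReal).toReal := by
        simp [Finset.sum_map, hB x]
    _ ≤ ‖x‖ ^ (2 : ENNReal).toReal := lp.sum_rpow_le_norm_rpow (by norm_num) x _

theorem pow_apply (hB : IsBackwardShift B) (n : ℕ) (x : ℓ²) (j : ℕ) :
    ((B ^ n) x : ∀ _ : ℕ, ℂ) j = (x : ∀ _ : ℕ, ℂ) (j + n) := by
  induction n generalizing j with
  | zero => rfl
  | succ n ih =>
    rw [pow_succ']
    change (B ((B ^ n) x) : ∀ _ : ℕ, ℂ) j = _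
    rw [hB, ih, add_right_comm, add_assoc]

theorem pow_single_add (hB : IsBackwardShift B) (n i : ℕ) (c : ℂ) :
    (B ^ n) (lp.single 2 (i + n) c) = lp.single 2 i c := by
  refine lp.ext (funext fun j => ?_)
  rw [hB.pow_apply]
  simp [Pi.single_apply]

theorem pow_single_of_lt (hB : IsBackwardShift B) {n i : ℕ} (h : i < n) (c : ℂ) :
    (B ^ n) (lp.single 2 i c) = 0 := by
  refine lp.ext (funext fun j => ?_)
  rw [hB.pow_apply]
  simp [Pi.single_apply]
  omega

theorem isTopologicallyTransitive_smul (hB : IsBackwardShift B) {a : ℂ} (ha : 1 < ‖a‖) :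
    IsTopologicallyTransitive ⇑(a • B) := by
  have ha0 : a ≠ 0 := norm_pos_iff.1 (one_pos.trans ha)
  intro U V hU ⟨u, hu⟩ hV ⟨v, hv⟩
  set P : ℕ → ℓ² → ℓ² := fun N f => ∑ i ∈ Finset.range N, lp.single 2 i (f i)
  have hP : ∀ f, Tendsto (fun N => P N f) atTop (𝓝 f) := fun f =>
    (lp.hasSum_single (by norm_num) f).tendsto_sum_nat
  obtain ⟨N, huN, hvN⟩ :=
    ((hP u).eventually (hU.mem_nhds hu)).and ((hP v).eventually (hV.mem_nhds hv)) |>.exists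
  -- `R n = Sⁿ (P N v)` for the forward shift `S`, so `Bⁿ` maps it back onto `P N v`.
  set R : ℕ → ℓ² := fun n => ∑ i ∈ Finset.range N, lp.single 2 (i + n) (v i)
  have hR : Tendsto (fun n => (a ^ n)⁻¹ • R n) atTop (𝓝 0) := by
    have hlim : Tendsto (fun n : ℕ => ‖a‖⁻¹ ^ n * ∑ i ∈ Finset.range N, ‖(v : ∀ _ : ℕ, ℂ) i‖)
        atTop (𝓝 0) := by
      simpa using (tendsto_pow_atTop_nhds_zero_of_lt_one (by positivity)
        (inv_lt_one_of_one_lt₀ ha)).mul_const _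
    refine squeeze_zero_norm (fun n => ?_) hlim
    rw [norm_smul, norm_inv, norm_pow, inv_pow]
    refine mul_le_mul_of_nonneg_left ((norm_sum_le _ _).trans_eq ?_) (by positivity)
    simp [lp.norm_single]
  have hw : Tendsto (fun n => P N u + (a ^ n)⁻¹ • R n) atTop (𝓝 (P N u)) := by
    simpa only [add_zero] using tendsto_const_nhds.add hR
  obtain ⟨n, hnU, hNn⟩ :=
    ((hw.eventually (hU.mem_nhds huN)).and (eventually_ge_atTop N)).exists
  refine ⟨n, P N u + (a ^ n)⁻¹ • R n, hnU, ?_⟩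
  have hPu : (B ^ n) (P N u) = 0 := by
    simp only [P, map_sum]
    exact Finset.sum_eq_zero fun i hi =>
      hB.pow_single_of_lt ((Finset.mem_range.1 hi).trans_le hNn) _
  have hRv : (B ^ n) (R n) = P N v := by
    simp only [R, P, map_sum, hB.pow_single_add]
  rw [Set.mem_preimage, ← FunLike.coe_pow_eq_iterate, smul_pow, smul_apply,
    map_add, map_smul, hPu, hRv, zero_add, smul_smul, mul_inv_cancel₀ (pow_ne_zero _ ha0), one_smul]
  exact hvN

end IsBackwardShift

theorem stmt16 (a : ℂ)
    (B : lp (fun _ : ℕ => ℂ) 2 →L[ℂ] lp (fun _ : ℕ => ℂ) 2)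
    (hB : ∀ (x : lp (fun _ : ℕ => ℂ) 2) (n : ℕ),
      (B x : ∀ _ : ℕ, ℂ) n = (x : ∀ _ : ℕ, ℂ) (n + 1)) :
    (DiskCyclic (a • B) ↔ 1 < ‖a‖) ∧ (DiskCyclic (a • B) ↔ Hypercyclic (a • B)) := by
  have hyper : 1 < ‖a‖ → Hypercyclic (a • B) := fun ha =>
    hypercyclic_of_isTopologicallyTransitive (IsBackwardShift.isTopologicallyTransitive_smul hB ha)
  have disk : DiskCyclic (a • B) → 1 < ‖a‖ := fun hdisk => by
    by_contra! ha
    exact not_diskCyclic_of_norm_le_one ((norm_smul_le a B).trans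
      (mul_le_one₀ ha (norm_nonneg B) (IsBackwardShift.norm_le_one hB))) hdisk
  exact ⟨⟨disk, fun ha => (hyper ha).diskCyclic⟩,
    ⟨fun h => hyper (disk h), Hypercyclic.diskCyclic⟩⟩
end
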